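/- arXiv:0910.3189 — 8 statements merged into one kernel-verified Lean document; each statement's English description precedes it below -/
import Mathlib

section
/- Let T be a complete L-theory. Suppose there exist L-formulas φ₀(x,ȳ) and φ₁(x,ȳ), a model M of T, and mutually indiscernible sequences (āᵢ)_{i∈ℕ} and (b̄ᵢ)_{i∈ℕ} of ȳ-tuples from M such that the formula φ₀(x,ā₀) ∧ ¬φ₀(x,ā₁) ∧ φ₁(x,b̄₀) ∧ ¬φ₁(x,b̄₁) is realized by some element of M. Then T is not dp-minimal, i.e. some model of T admits an ICT pattern. -/
open FirstOrder Language Set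

universe u v w

namespace DpMin

variable {L : FirstOrder.Language.{u, v}}

/-- Realization of a formula `φ(x, ȳ)` at an element `x` and a parameter tuple `ā`. -/
def Real1 {M : Type w} [L.Structure M] {m : ℕ}
    (φ : L.Formula (Fin 1 ⊕ Fin m)) (x : M) (a : Fin m → M) : Prop :=
  φ.Realize (Sum.elim (fun _ => x) a)

/-- An ICT pattern: for all `i j`, the set
`{φ(x,āᵢ), ψ(x,b̄ⱼ)} ∪ {¬φ(x,āₗ) : l ≠ i} ∪ {¬ψ(x,b̄ₖ) : k ≠ j}` is consistent, i.e. every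
finite subset of it is realized by some element of `M`. -/
def IsICTPattern {M : Type w} [L.Structure M] {m : ℕ}
    (φ ψ : L.Formula (Fin 1 ⊕ Fin m)) (a b : ℕ → Fin m → M) : Prop :=
  ∀ (i j : ℕ) (s : Finset ℕ), ∃ x : M,
    Real1 φ x (a i) ∧ Real1 ψ x (b j) ∧
    (∀ l ∈ s, l ≠ i → ¬ Real1 φ x (a l)) ∧
    (∀ k ∈ s, k ≠ j → ¬ Real1 ψ x (b k))

/-- A theory is dp-minimal if no model of it admits an ICT pattern. -/
def IsDpMinimal (T : L.Theory) : Prop :=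
  ∀ (M : Type w) [L.Structure M] [Nonempty M], M ⊨ T →
    ¬ ∃ (m : ℕ) (φ ψ : L.Formula (Fin 1 ⊕ Fin m)) (a b : ℕ → Fin m → M),
      IsICTPattern φ ψ a b

/-- The sequence of `m`-tuples `a`, restricted to indices in `S`, is indiscernible over the
parameter set `A`: increasing tuples of indices from `S` realize the same formulas with
parameters from `A`. -/
def IndiscernibleOn {M : Type w} [L.Structure M] {I : Type*} [LinearOrder I] {m : ℕ}
    (a : I → Fin m → M) (S : Set I) (A : Set M) : Prop :=
  ∀ (n k : ℕ) (φ : L.Formula ((Fin n × Fin m) ⊕ Fin k)) (c : Fin k → M),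
    (∀ t, c t ∈ A) →
    ∀ i j : Fin n → I, StrictMono i → StrictMono j →
      (∀ p, i p ∈ S) → (∀ p, j p ∈ S) →
      (φ.Realize (Sum.elim (fun p => a (i p.1) p.2) c) ↔
        φ.Realize (Sum.elim (fun p => a (j p.1) p.2) c))

/-- Indiscernibility of the whole sequence over a parameter set. -/
def IndiscernibleOver {M : Type w} [L.Structure M] {I : Type*} [LinearOrder I] {m : ℕ}
    (a : I → Fin m → M) (A : Set M) : Prop :=
  IndiscernibleOn (L := L) a Set.univ A

/-- Two sequences are mutually indiscernible if each is indiscernible over the union of the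
ranges of the other. -/
def MutuallyIndiscernible {M : Type w} [L.Structure M] {m : ℕ}
    (a b : ℕ → Fin m → M) : Prop :=
  IndiscernibleOver (L := L) a (⋃ j, Set.range (b j)) ∧
  IndiscernibleOver (L := L) b (⋃ i, Set.range (a i))

end DpMin

/-!
The ICT pattern uses `φ₀(x; ȳ₁ȳ₂) := φ₀(x, ȳ₁) ∧ ¬φ₀(x, ȳ₂)` on the pairs `(ā₂ₗ, ā₂ₗ₊₁)`, and
likewise for `φ₁` and `b̄`. Row `i`, column `j` needs an `x` such that `φ₀(x, -)` separates the
`i`-th pair of `ā` and no other one, and `φ₁(x, -)` does the same for the `j`-th pair of `b̄`.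

For one sequence: by indiscernibility the given alternation can be moved to `(ā₃ᵢ, ā₃ᵢ₊₁)`. In every
other block `{3l, 3l+1, 3l+2}` two of the three truth values of `φ₀(x, -)` agree, which yields an
increasing sequence of pairs on which `x` has the required pattern, and indiscernibility moves the
pattern back to the standard pairs. This is done first for `ā` over `b̄₀b̄₁`, carrying the
alternation of `φ₁` along as a condition with parameters, and then for `b̄` over the `ā`'s, carrying
the pattern of `φ₀` along.
-/

namespace DpMin

section

variable {L : FirstOrder.Language.{u, v}} {M : Type w} [L.Structure M] {m : ℕ}

def blockFormula (φ : L.Formula (Fin 1 ⊕ Fin m)) {n : ℕ} (p : Fin n) :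
    L.Formula (Fin 1 ⊕ (Fin n × Fin m)) :=
  φ.relabel (Sum.map id (p, ·))

theorem realize_blockFormula {φ : L.Formula (Fin 1 ⊕ Fin m)} {n : ℕ} {p : Fin n} {x : M}
    {v : Fin n × Fin m → M} :
    (blockFormula φ p).Realize (Sum.elim (fun _ => x) v) ↔ Real1 φ x (fun y => v (p, y)) := by
  simp only [blockFormula, Formula.realize_relabel, Sum.elim_comp_map]
  rfl

def SeparatesOnlyPair (φ : L.Formula (Fin 1 ⊕ Fin m)) (x : M) (g : ℕ → Fin m → M) {N : ℕ}
    (i : Fin N) : Prop :=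
  Real1 φ x (g (2 * i)) ∧ ¬ Real1 φ x (g (2 * i + 1)) ∧
    ∀ l : Fin N, l ≠ i → (Real1 φ x (g (2 * l)) ↔ Real1 φ x (g (2 * l + 1)))

noncomputable def separatesOnlyPairFormula (φ : L.Formula (Fin 1 ⊕ Fin m)) {N : ℕ}
    (i : Fin N) : L.Formula (Fin 1 ⊕ (Fin (2 * N) × Fin m)) :=
  let left (l : Fin N) : Fin (2 * N) := ⟨2 * l, by omega⟩
  let right (l : Fin N) : Fin (2 * N) := ⟨2 * l + 1, by omega⟩
  blockFormula φ (left i) ⊓ ∼(blockFormula φ (right i)) ⊓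
    Formula.iInf fun l : {l : Fin N // l ≠ i} =>
      (blockFormula φ (left l)).iff (blockFormula φ (right l))

theorem realize_separatesOnlyPairFormula {φ : L.Formula (Fin 1 ⊕ Fin m)} {N : ℕ} {i : Fin N}
    {x : M} {g : ℕ → Fin m → M} :
    (separatesOnlyPairFormula φ i).Realize (Sum.elim (fun _ => x) fun p => g p.1 p.2) ↔
      SeparatesOnlyPair φ x g i := by
  simp [separatesOnlyPairFormula, realize_blockFormula, SeparatesOnlyPair, and_assoc]

theorem IndiscernibleOver.exists_realize_iff {I : Type*} [LinearOrder I] {e : I → Fin m → M}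
    {A : Set M} (he : IndiscernibleOver (L := L) e A) {n k : ℕ}
    (χ : L.Formula (Fin 1 ⊕ ((Fin n × Fin m) ⊕ Fin k))) {c : Fin k → M} (hc : ∀ t, c t ∈ A)
    {u u' : Fin n → I} (hu : StrictMono u) (hu' : StrictMono u') :
    (∃ x, χ.Realize (Sum.elim (fun _ => x) (Sum.elim (fun p => e (u p.1) p.2) c))) ↔
      ∃ x, χ.Realize (Sum.elim (fun _ => x) (Sum.elim (fun p => e (u' p.1) p.2) c)) := by
  have := he n k ((χ.relabel Sum.swap).iExs (Fin 1)) c hc u u' hu hu'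
    (fun _ => mem_univ _) (fun _ => mem_univ _)
  simp only [Formula.realize_iExs, Formula.realize_relabel] at this
  have hconst (x : M) : (uniqueElim x : Fin 1 → M) = fun _ => x := funext (uniqueElim_const x)
  simpa [(Equiv.funUnique (Fin 1) M).exists_congr_left, hconst] using this

theorem IndiscernibleOver.exists_separatesOnlyPair_iff {I : Type*} [LinearOrder I]
    {e : I → Fin m → M} {A : Set M} (he : IndiscernibleOver (L := L) e A)
    {φ : L.Formula (Fin 1 ⊕ Fin m)} {k : ℕ} {ψ : L.Formula (Fin 1 ⊕ Fin k)} {c : Fin k → M}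
    (hc : ∀ t, c t ∈ A) {N : ℕ} (i : Fin N) {u u' : ℕ → I} (hu : StrictMono u)
    (hu' : StrictMono u') :
    (∃ x, SeparatesOnlyPair φ x (fun n => e (u n)) i ∧ Real1 ψ x c) ↔
      ∃ x, SeparatesOnlyPair φ x (fun n => e (u' n)) i ∧ Real1 ψ x c := by
  have := he.exists_realize_iff ((separatesOnlyPairFormula φ i).relabel (Sum.map id Sum.inl) ⊓
    ψ.relabel (Sum.map id Sum.inr)) hc (hu.comp Fin.val_strictMono) (hu'.comp Fin.val_strictMono)
  simp only [Formula.realize_inf, Formula.realize_relabel, Sum.elim_comp_map, Function.comp_id,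
    Sum.elim_comp_inl, Sum.elim_comp_inr, Function.comp_apply,
    realize_separatesOnlyPairFormula (g := fun n => e (u n)),
    realize_separatesOnlyPairFormula (g := fun n => e (u' n))] at this
  exact this

theorem exists_pair_iff_among_three (P : ℕ → Prop) (n : ℕ) :
    ∃ p q, n ≤ p ∧ p < q ∧ q ≤ n + 2 ∧ (P p ↔ P q) := by
  by_cases h₀₁ : P n ↔ P (n + 1)
  · exact ⟨n, n + 1, le_rfl, by omega, by omega, h₀₁⟩
  by_cases h₁₂ : P (n + 1) ↔ P (n + 2)
  · exact ⟨n + 1, n + 2, by omega, by omega, le_rfl, h₁₂⟩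
  · exact ⟨n, n + 2, le_rfl, by omega, le_rfl, by tauto⟩

def interleave {α : Type*} (f g : ℕ → α) (n : ℕ) : α :=
  if n % 2 = 0 then f (n / 2) else g (n / 2)

@[simp]
theorem interleave_two_mul {α : Type*} (f g : ℕ → α) (l : ℕ) : interleave f g (2 * l) = f l := by
  simp [interleave]

@[simp]
theorem interleave_two_mul_add_one {α : Type*} (f g : ℕ → α) (l : ℕ) :
    interleave f g (2 * l + 1) = g l := by
  simp [interleave, Nat.add_mod, Nat.add_div]

theorem strictMono_interleave {α : Type*} [Preorder α] {f g : ℕ → α} (hfg : ∀ l, f l < g l)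
    (hgf : ∀ l, g l < f (l + 1)) : StrictMono (interleave f g) := by
  refine strictMono_nat_of_lt_succ fun n => ?_
  obtain ⟨l, rfl | rfl⟩ := Nat.even_or_odd' n
  · simpa using hfg l
  · simpa [show 2 * l + 1 + 1 = 2 * (l + 1) by ring] using hgf l

theorem exists_strictMono_pairs_agree_except (P : ℕ → Prop) (i : ℕ) :
    ∃ u : ℕ → ℕ, StrictMono u ∧ u (2 * i) = 3 * i ∧ u (2 * i + 1) = 3 * i + 1 ∧
      ∀ l ≠ i, (P (u (2 * l)) ↔ P (u (2 * l + 1))) := by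
  classical
  choose p q hp hpq hq hP using fun l => exists_pair_iff_among_three P (3 * l)
  refine ⟨interleave (fun l => if l = i then 3 * i else p l)
    (fun l => if l = i then 3 * i + 1 else q l), strictMono_interleave (fun l => ?_) (fun l => ?_),
    by simp, by simp, fun l hl => by simpa [hl] using hP l⟩
  · split_ifs
    · omega
    · exact hpq l
  · have := hp (l + 1)
    have := hq l
    split_ifs <;> omega

theorem IndiscernibleOver.exists_separatesOnlyPair {e : ℕ → Fin m → M} {A : Set M}
    (he : IndiscernibleOver (L := L) e A) {φ : L.Formula (Fin 1 ⊕ Fin m)} {k : ℕ}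
    {ψ : L.Formula (Fin 1 ⊕ Fin k)} {c : Fin k → M} (hc : ∀ t, c t ∈ A)
    (h : ∃ x, Real1 φ x (e 0) ∧ ¬ Real1 φ x (e 1) ∧ Real1 ψ x c) {N : ℕ} (i : Fin N) :
    ∃ x, SeparatesOnlyPair φ x e i ∧ Real1 ψ x c := by
  obtain ⟨x, hx₀, hx₁, hψ⟩ :
      ∃ x, Real1 φ x (e (3 * i)) ∧ ¬ Real1 φ x (e (3 * i + 1)) ∧ Real1 ψ x c := by
    have := he.exists_separatesOnlyPair_iff (φ := φ) (ψ := ψ) hc (0 : Fin 1) strictMono_id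
      (strictMono_id.add_const (3 * i : ℕ))
    simpa [SeparatesOnlyPair, add_comm, and_assoc] using
      this.1 (by simpa [SeparatesOnlyPair, and_assoc] using h)
  obtain ⟨u, hu, hu₀, hu₁, hP⟩ :=
    exists_strictMono_pairs_agree_except (fun n => Real1 φ x (e n)) i
  refine (he.exists_separatesOnlyPair_iff hc i hu strictMono_id).1
    ⟨x, ⟨by simpa [hu₀] using hx₀, by simpa [hu₁] using hx₁,
      fun l hl => hP l (Fin.val_injective.ne hl)⟩, hψ⟩

def pairFormula (φ : L.Formula (Fin 1 ⊕ Fin m)) : L.Formula (Fin 1 ⊕ Fin (m + m)) :=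
  φ.relabel (Sum.map id (Fin.castAdd m)) ⊓ ∼(φ.relabel (Sum.map id (Fin.natAdd m)))

theorem real1_pairFormula {φ : L.Formula (Fin 1 ⊕ Fin m)} {x : M} {g h : Fin m → M} :
    Real1 (pairFormula φ) x (Fin.append g h) ↔ Real1 φ x g ∧ ¬ Real1 φ x h := by
  have hg : Fin.append g h ∘ Fin.castAdd m = g := funext (Fin.append_left g h)
  have hh : Fin.append g h ∘ Fin.natAdd m = h := funext (Fin.append_right g h)
  simp only [Real1, pairFormula, Formula.realize_inf, Formula.realize_not, Formula.realize_relabel,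
    Sum.elim_comp_map, Function.comp_id, hg, hh]

def pairSeq (a : ℕ → Fin m → M) (l : ℕ) : Fin (m + m) → M :=
  Fin.append (a (2 * l)) (a (2 * l + 1))

theorem SeparatesOnlyPair.real1_pairFormula_iff {φ : L.Formula (Fin 1 ⊕ Fin m)} {x : M}
    {g : ℕ → Fin m → M} {N : ℕ} {i : Fin N} (h : SeparatesOnlyPair φ x g i) (l : Fin N) :
    Real1 (pairFormula φ) x (pairSeq g l) ↔ l = i := by
  rw [pairSeq, real1_pairFormula]
  by_cases hl : l = i
  · subst hl
    exact iff_of_true ⟨h.1, h.2.1⟩ rfl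
  · simp [hl, h.2.2 l hl]

theorem real1_relabel_finProdFinEquiv {n : ℕ} {χ : L.Formula (Fin 1 ⊕ (Fin n × Fin m))} {x : M}
    {v : Fin n × Fin m → M} :
    Real1 (χ.relabel (Sum.map id finProdFinEquiv)) x (v ∘ finProdFinEquiv.symm) ↔
      χ.Realize (Sum.elim (fun _ => x) v) := by
  rw [Real1, Formula.realize_relabel, Sum.elim_comp_map, Function.comp_id, Function.comp_assoc,
    Equiv.symm_comp_self, Function.comp_id]

theorem append_mem_iUnion_range (b : ℕ → Fin m → M) (i j : ℕ) (t : Fin (m + m)) :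
    Fin.append (b i) (b j) t ∈ ⋃ l, range (b l) :=
  Fin.addCases (fun y => mem_iUnion.2 ⟨i, y, (Fin.append_left _ _ y).symm⟩)
    (fun y => mem_iUnion.2 ⟨j, y, (Fin.append_right _ _ y).symm⟩) t

theorem MutuallyIndiscernible.isICTPattern {φ₀ φ₁ : L.Formula (Fin 1 ⊕ Fin m)}
    {a b : ℕ → Fin m → M} (hmut : MutuallyIndiscernible (L := L) a b)
    (hreal : ∃ x : M, Real1 φ₀ x (a 0) ∧ ¬ Real1 φ₀ x (a 1) ∧
      Real1 φ₁ x (b 0) ∧ ¬ Real1 φ₁ x (b 1)) :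
    IsICTPattern (pairFormula φ₀) (pairFormula φ₁) (pairSeq a) (pairSeq b) := by
  intro i j s
  set N := i + j + s.sup id + 1
  have hs : ∀ l ∈ s, l < N := fun l hl => by
    have := Finset.le_sup (f := id) hl
    simp only [id] at this
    omega
  set i' : Fin N := ⟨i, by omega⟩
  set j' : Fin N := ⟨j, by omega⟩
  obtain ⟨x₁, ha₁, hb₁⟩ := hmut.1.exists_separatesOnlyPair (ψ := pairFormula φ₁)
    (append_mem_iUnion_range b 0 1)
    (by
      obtain ⟨x, h₀, h₁, h⟩ := hreal
      exact ⟨x, h₀, h₁, real1_pairFormula.2 h⟩) i'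
  set cₐ := (fun p : Fin (2 * N) × Fin m => a p.1 p.2) ∘ finProdFinEquiv.symm
  have hpatₐ (x : M) : Real1 ((separatesOnlyPairFormula φ₀ i').relabel
      (Sum.map id finProdFinEquiv)) x cₐ ↔ SeparatesOnlyPair φ₀ x a i' := by
    rw [real1_relabel_finProdFinEquiv, realize_separatesOnlyPairFormula]
  rw [real1_pairFormula] at hb₁
  obtain ⟨x₂, hb₂, ha₂⟩ := hmut.2.exists_separatesOnlyPair (c := cₐ)
    (fun _ => mem_iUnion.2 ⟨_, mem_range_self _⟩) ⟨x₁, hb₁.1, hb₁.2, (hpatₐ x₁).2 ha₁⟩ j'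
  rw [hpatₐ] at ha₂
  refine ⟨x₂, (ha₂.real1_pairFormula_iff i').2 rfl, (hb₂.real1_pairFormula_iff j').2 rfl,
    fun l hl hli => ?_, fun l hl hlj => ?_⟩
  · exact mt (ha₂.real1_pairFormula_iff ⟨l, hs l hl⟩).1 (by simpa [Fin.ext_iff, i'] using hli)
  · exact mt (hb₂.real1_pairFormula_iff ⟨l, hs l hl⟩).1 (by simpa [Fin.ext_iff, j'] using hlj)

end

theorem not_dpMinimal_of_config_general {L : FirstOrder.Language.{u, v}}
    (T : L.Theory)
    (M : Type w) [L.Structure M] [Nonempty M] (hM : M ⊨ T)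
    (m : ℕ) (φ₀ φ₁ : L.Formula (Fin 1 ⊕ Fin m)) (a b : ℕ → Fin m → M)
    (hmut : MutuallyIndiscernible (L := L) a b)
    (hreal : ∃ x : M, Real1 φ₀ x (a 0) ∧ ¬ Real1 φ₀ x (a 1) ∧
      Real1 φ₁ x (b 0) ∧ ¬ Real1 φ₁ x (b 1)) :
    ¬ IsDpMinimal.{u, v, w} T := fun hdp =>
  hdp M hM ⟨m + m, pairFormula φ₀, pairFormula φ₁, pairSeq a, pairSeq b, hmut.isICTPattern hreal⟩

/-- If in some model of `T` there are mutually indiscernible sequences `(āᵢ)` and `(b̄ᵢ)` and an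
element realizing `φ₀(x,ā₀) ∧ ¬φ₀(x,ā₁) ∧ φ₁(x,b̄₀) ∧ ¬φ₁(x,b̄₁)`, then `T` is not dp-minimal. -/
theorem not_dpMinimal_of_config {L : FirstOrder.Language.{u, v}}
    (T : L.Theory) (hT : T.IsComplete)
    (M : Type w) [L.Structure M] [Nonempty M] (hM : M ⊨ T)
    (m : ℕ) (φ₀ φ₁ : L.Formula (Fin 1 ⊕ Fin m)) (a b : ℕ → Fin m → M)
    (hmut : MutuallyIndiscernible (L := L) a b)
    (hreal : ∃ x : M, Real1 φ₀ x (a 0) ∧ ¬ Real1 φ₀ x (a 1) ∧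
      Real1 φ₁ x (b 0) ∧ ¬ Real1 φ₁ x (b 1)) :
    ¬ IsDpMinimal.{u, v, w} T :=
  not_dpMinimal_of_config_general T M hM m φ₀ φ₁ a b hmut hreal

end DpMin
end

section
/- Let T be a complete L-theory and suppose L-formulas φ(x,ȳ) and ψ(x,ȳ), together with sequences from a model of T, form an ICT pattern witnessing that T is not dp-minimal. If φ(x,ȳ) is logically equivalent to a disjunction φ₁(x,ȳ) ∨ … ∨ φₙ(x,ȳ), then for some l with 1 ≤ l ≤ n, the formulas φₗ(x,ȳ) and ψ(x,ȳ) (with suitable sequences of parameter tuples in some model of T) form an ICT pattern; in particular φₗ and ψ witness that T is not dp-minimal. -/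
/-!
Take a finite grid of an ICT pattern for `φ, ψ` and colour each cell `(i, j)` by a disjunct `φₗ`
true at its witness. Sorting the columns by their colour vectors and then the rows by their colour
(two pigeonholes) gives an `N × N` monochromatic subgrid, and since `φₗ` implies `φ` it is a
finite ICT pattern for `φₗ, ψ`. Some single `l` occurs for every `N`, and by Łoś's theorem an
ultrapower of the model glues these finite patterns into an infinite one.
-/

open FirstOrder Language Set

universe u v w

namespace DpMin

theorem exists_monochromatic_grid {α ρ γ : Type*} [Fintype α] [Nonempty α]
    [Fintype ρ] [Fintype γ] {N : ℕ} (c : ρ → γ → α)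
    (hρ : Fintype.card α * N ≤ Fintype.card ρ)
    (hγ : Fintype.card α ^ Fintype.card ρ * N ≤ Fintype.card γ) :
    ∃ (u : Fin N ↪ ρ) (v : Fin N ↪ γ) (l : α), ∀ p q, c (u p) (v q) = l := by
  classical
  obtain ⟨f, hf⟩ := Fintype.exists_le_card_fiber_of_mul_le_card (fun j i => c i j)
    (by rwa [Fintype.card_fun])
  obtain ⟨l, hl⟩ := Fintype.exists_le_card_fiber_of_mul_le_card f hρ
  obtain ⟨u⟩ := Function.Embedding.nonempty_of_card_le (α := Fin N) (β := {i // f i = l})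
    (by simpa [Fintype.card_subtype] using hl)
  obtain ⟨v⟩ := Function.Embedding.nonempty_of_card_le (α := Fin N)
    (β := {j // (fun i => c i j) = f}) (by simpa [Fintype.card_subtype] using hf)
  refine ⟨u.trans (.subtype _), v.trans (.subtype _), l, fun p q => ?_⟩
  exact (congrFun (v q).2 (u p)).trans (u p).2

section Patterns

variable {L : FirstOrder.Language.{u, v}} {M : Type w} [L.Structure M] {m : ℕ}

/-- An ICT pattern in which the types of the definition are realized outright rather than just
finitely satisfiable; over finite index types the two notions agree. -/
def IsRealizedICTPattern {ρ γ : Type*} (φ ψ : L.Formula (Fin 1 ⊕ Fin m))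
    (a : ρ → Fin m → M) (b : γ → Fin m → M) : Prop :=
  ∀ i j, ∃ x : M, Real1 φ x (a i) ∧ Real1 ψ x (b j) ∧
    (∀ k, k ≠ i → ¬ Real1 φ x (a k)) ∧ (∀ k, k ≠ j → ¬ Real1 ψ x (b k))

theorem IsICTPattern.isRealizedICTPattern_fin {φ ψ : L.Formula (Fin 1 ⊕ Fin m)}
    {a b : ℕ → Fin m → M} (h : IsICTPattern φ ψ a b) (R C : ℕ) :
    IsRealizedICTPattern φ ψ (fun i : Fin R => a i) (fun j : Fin C => b j) := by
  intro i j
  obtain ⟨x, hφ, hψ, hφ', hψ'⟩ := h i j (Finset.range (max R C))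
  refine ⟨x, hφ, hψ, fun k hk => hφ' k ?_ (Fin.val_injective.ne hk),
    fun k hk => hψ' k ?_ (Fin.val_injective.ne hk)⟩ <;>
  simp only [Finset.mem_range] <;> omega

theorem IsRealizedICTPattern.comp_injective {ρ γ ρ' γ' : Type*}
    {φ ψ : L.Formula (Fin 1 ⊕ Fin m)} {a : ρ → Fin m → M} {b : γ → Fin m → M}
    (h : IsRealizedICTPattern φ ψ a b) {u : ρ' → ρ} {v : γ' → γ}
    (hu : Function.Injective u) (hv : Function.Injective v) :
    IsRealizedICTPattern φ ψ (a ∘ u) (b ∘ v) := by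
  intro i j
  obtain ⟨x, hφ, hψ, hφ', hψ'⟩ := h (u i) (v j)
  exact ⟨x, hφ, hψ, fun k hk => hφ' (u k) (hu.ne hk), fun k hk => hψ' (v k) (hv.ne hk)⟩

/-- Colour each cell `(i, j)` by a disjunct satisfied by its witness; a monochromatic grid is a
pattern for that disjunct, since each disjunct implies `φ`. -/
theorem IsRealizedICTPattern.exists_disjunct {ρ γ ι : Type*} [Fintype ρ] [Fintype γ]
    [Fintype ι] [Nonempty ι] {φ ψ : L.Formula (Fin 1 ⊕ Fin m)} {a : ρ → Fin m → M}
    {b : γ → Fin m → M} (h : IsRealizedICTPattern φ ψ a b)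
    {φs : ι → L.Formula (Fin 1 ⊕ Fin m)}
    (hφ : ∀ (x : M) c, Real1 φ x c ↔ ∃ l, Real1 (φs l) x c) {N : ℕ}
    (hρ : Fintype.card ι * N ≤ Fintype.card ρ)
    (hγ : Fintype.card ι ^ Fintype.card ρ * N ≤ Fintype.card γ) :
    ∃ (l : ι) (a' b' : Fin N → Fin m → M), IsRealizedICTPattern (φs l) ψ a' b' := by
  choose x hxφ hxψ hxφ' hxψ' using h
  choose colour hcolour using fun i j => (hφ (x i j) (a i)).1 (hxφ i j)
  obtain ⟨u, v, l, hl⟩ := exists_monochromatic_grid colour hρ hγ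
  refine ⟨l, a ∘ u, b ∘ v, fun p q => ⟨x (u p) (v q), hl p q ▸ hcolour _ _, hxψ _ _,
    fun k hk hk' => hxφ' _ _ (u k) (u.injective.ne hk) ((hφ _ _).2 ⟨l, hk'⟩),
    fun k hk => hxψ' _ _ (v k) (v.injective.ne hk)⟩⟩

end Patterns

section Ultraproduct

variable {L : FirstOrder.Language.{u, v}} {ι : Type*} {U : Ultrafilter ι} {M : ι → Type w}
  [∀ N, L.Structure (M N)] [∀ N, Nonempty (M N)] {m : ℕ}

theorem real1_ultraproduct_cast (θ : L.Formula (Fin 1 ⊕ Fin m)) (x : ∀ N, M N)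
    (c : Fin m → ∀ N, M N) :
    Real1 θ (x : (U : Filter ι).Product M) (fun t => (c t : (U : Filter ι).Product M)) ↔
      ∀ᶠ N in U, Real1 θ (x N) (fun t => c t N) := by
  have h := Ultraproduct.realize_formula_cast (u := U) θ (Sum.elim (fun _ => x) c)
  simp only [Real1]
  convert h using 2
  · ext (_ | _) <;> rfl
  · ext N
    congr! 1
    ext (_ | _) <;> rfl

theorem ultraproduct_model (T : L.Theory) [∀ N, T.Model (M N)] :
    (U : Filter ι).Product M ⊨ T :=
  (Theory.model_iff _).2 fun σ hσ =>
    (Ultraproduct.sentence_realize σ).2 (.of_forall fun _ => Theory.realize_sentence_of_mem T hσ)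

theorem isICTPattern_ultraproduct {φ ψ : L.Formula (Fin 1 ⊕ Fin m)}
    {a b : ℕ → Fin m → ∀ N, M N}
    (h : ∀ K, ∀ᶠ N in U, IsRealizedICTPattern φ ψ (fun (i : Fin K) t => a i t N)
      (fun (j : Fin K) t => b j t N)) :
    IsICTPattern φ ψ (fun i t => (a i t : (U : Filter ι).Product M))
      (fun j t => (b j t : (U : Filter ι).Product M)) := by
  intro i j s
  obtain ⟨K, hi, hj, hs⟩ : ∃ K, i < K ∧ j < K ∧ ∀ k ∈ s, k < K :=
    ⟨max i j + s.sup id + 1, by omega, by omega,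
      fun k hk => by have := s.le_sup (f := id) hk; simp only [id] at this; omega⟩
  obtain ⟨x, hx⟩ := Filter.skolem.1 ((h K).mono fun N hN => hN ⟨i, hi⟩ ⟨j, hj⟩)
  refine ⟨(x : (U : Filter ι).Product M),
    (real1_ultraproduct_cast _ _ _).2 (hx.mono fun N hN => hN.1),
    (real1_ultraproduct_cast _ _ _).2 (hx.mono fun N hN => hN.2.1), fun k hk hki => ?_,
    fun k hk hkj => ?_⟩ <;>
  rw [real1_ultraproduct_cast, ← Ultrafilter.eventually_not]
  · exact hx.mono fun N hN => hN.2.2.1 ⟨k, hs k hk⟩ (Fin.ne_of_val_ne hki)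
  · exact hx.mono fun N hN => hN.2.2.2 ⟨k, hs k hk⟩ (Fin.ne_of_val_ne hkj)

open Fin.NatCast in
theorem exists_isICTPattern_ultrapower {M : Type w} [L.Structure M] [Nonempty M]
    {φ ψ : L.Formula (Fin 1 ⊕ Fin m)}
    (h : ∀ K, ∃ a b : Fin K → Fin m → M, IsRealizedICTPattern φ ψ a b) :
    ∃ a b : ℕ → Fin m → (Filter.hyperfilter ℕ : Filter ℕ).Product fun _ => M,
      IsICTPattern φ ψ a b := by
  choose A B hAB using h
  -- The cast `ℕ → Fin (N + 1)` reduces mod `N + 1`; it is injective on the indices `< K ≤ N`.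
  refine ⟨fun i t => (fun N => A (N + 1) i t : ℕ → M),
    fun j t => (fun N => B (N + 1) j t : ℕ → M), isICTPattern_ultraproduct fun K => ?_⟩
  have hcast (N : ℕ) (hN : K ≤ N) : StrictMono fun i : Fin K => ((i : ℕ) : Fin (N + 1)) :=
    fun i j hij => Fin.natCast_strictMono (by omega) hij
  filter_upwards [Nat.hyperfilter_le_atTop (Filter.eventually_ge_atTop K)] with N hN
  exact (hAB (N + 1)).comp_injective (hcast N hN).injective (hcast N hN).injective

end Ultraproduct

theorem exists_forall_of_forall_exists_antitone {α : Type*} [Finite α] {P : α → ℕ → Prop}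
    (hP : ∀ l, Antitone (P l)) (h : ∀ K, ∃ l, P l K) : ∃ l, ∀ K, P l K := by
  by_contra! hne
  choose K hK using hne
  obtain ⟨B, hB⟩ := Finite.exists_le K
  obtain ⟨l, hl⟩ := h B
  exact hK l (hP l (hB l) hl)

theorem ict_of_disjunction_general {L : FirstOrder.Language.{u, v}}
    (T : L.Theory)
    (m : ℕ) (φ ψ : L.Formula (Fin 1 ⊕ Fin m))
    (M : FirstOrder.Language.Theory.ModelType.{u, v, w} T)
    (a b : ℕ → Fin m → M) (hICT : IsICTPattern φ ψ a b)
    (n : ℕ) (φs : Fin n → L.Formula (Fin 1 ⊕ Fin m))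
    (heq : ∀ (N : Type w) [L.Structure N] (v : Fin 1 ⊕ Fin m → N),
      φ.Realize v ↔ ∃ l : Fin n, (φs l).Realize v) :
    ∃ (l : Fin n) (M' : FirstOrder.Language.Theory.ModelType.{u, v, w} T)
      (a' b' : ℕ → Fin m → M'),
      IsICTPattern (φs l) ψ a' b' := by
  have hφ : ∀ (x : M) c, Real1 φ x c ↔ ∃ l, Real1 (φs l) x c := fun x c => heq M _
  have : Nonempty (Fin n) := by
    obtain ⟨x, hx, -⟩ := hICT 0 0 ∅
    exact ((hφ x _).1 hx).nonempty
  have hfin (K : ℕ) :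
      ∃ l, ∃ a' b' : Fin K → Fin m → M, IsRealizedICTPattern (φs l) ψ a' b' :=
    (hICT.isRealizedICTPattern_fin (n * K) (n ^ (n * K) * K)).exists_disjunct hφ
      (by simp) (by simp)
  have hanti (l : Fin n) :
      Antitone fun K => ∃ a' b' : Fin K → Fin m → M, IsRealizedICTPattern (φs l) ψ a' b' :=
    fun _ _ hK ⟨_, _, h⟩ =>
      ⟨_, _, h.comp_injective (Fin.castLE_injective hK) (Fin.castLE_injective hK)⟩
  obtain ⟨l, hl⟩ := exists_forall_of_forall_exists_antitone hanti hfin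
  obtain ⟨a', b', h⟩ := exists_isICTPattern_ultrapower hl
  have := ultraproduct_model (U := Filter.hyperfilter ℕ) (M := fun _ => M) T
  exact ⟨l, .of T ((Filter.hyperfilter ℕ : Filter ℕ).Product fun _ => M), a', b', h⟩

/-- If `φ` and `ψ` witness (via an ICT pattern in some model of `T`) that `T` is not dp-minimal,
and `φ` is logically equivalent to the disjunction `φ₁ ∨ … ∨ φₙ`, then for some `l` the formulas
`φₗ` and `ψ` witness that `T` is not dp-minimal. -/
theorem ict_of_disjunction {L : FirstOrder.Language.{u, v}}
    (T : L.Theory) (hT : T.IsComplete)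
    (m : ℕ) (φ ψ : L.Formula (Fin 1 ⊕ Fin m))
    (M : FirstOrder.Language.Theory.ModelType.{u, v, w} T)
    (a b : ℕ → Fin m → M) (hICT : IsICTPattern φ ψ a b)
    (n : ℕ) (hn : 1 ≤ n) (φs : Fin n → L.Formula (Fin 1 ⊕ Fin m))
    (heq : ∀ (N : Type w) [L.Structure N] (v : Fin 1 ⊕ Fin m → N),
      φ.Realize v ↔ ∃ l : Fin n, (φs l).Realize v) :
    ∃ (l : Fin n) (M' : FirstOrder.Language.Theory.ModelType.{u, v, w} T)
      (a' b' : ℕ → Fin m → M'),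
      IsICTPattern (φs l) ψ a' b' :=
  ict_of_disjunction_general T m φ ψ M a b hICT n φs heq

end DpMin
end

section
/- Suppose the complete L-theory T is not dp-minimal. Then there is a single L-formula θ(x,ȳ), a model M of T, and sequences (c̄ᵢ)_{i∈ℕ} and (d̄ⱼ)_{j∈ℕ} of ȳ-tuples from M such that for any i ≠ j the set of formulas {θ(x,c̄ᵢ), θ(x,d̄ⱼ)} ∪ {¬θ(x,c̄ₖ) : k ≠ i} ∪ {¬θ(x,d̄ₗ) : l ≠ j} is consistent, i.e. every finite subset of it is realized by some element of M. -/
open FirstOrder Language Set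

universe u v w

namespace DpMin

variable {L : FirstOrder.Language.{u, v}} {M : Type w} [L.Structure M] {m n : ℕ}

/-- `θ(x, ȳ₁ȳ₂) = φ(x, ȳ₁) ∨ ψ(x, ȳ₂)`, with the parameter tuple split by `Fin.append`. -/
def supAppend (φ : L.Formula (Fin 1 ⊕ Fin m)) (ψ : L.Formula (Fin 1 ⊕ Fin n)) :
    L.Formula (Fin 1 ⊕ Fin (m + n)) :=
  φ.relabel (Sum.map id (Fin.castAdd n)) ⊔ ψ.relabel (Sum.map id (Fin.natAdd m))

theorem real1_supAppend (φ : L.Formula (Fin 1 ⊕ Fin m)) (ψ : L.Formula (Fin 1 ⊕ Fin n))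
    (x : M) (u : Fin m → M) (v : Fin n → M) :
    Real1 (supAppend φ ψ) x (Fin.append u v) ↔ Real1 φ x u ∨ Real1 ψ x v := by
  have hu : Sum.elim (fun _ : Fin 1 => x) (Fin.append u v) ∘ Sum.map id (Fin.castAdd n) =
      Sum.elim (fun _ => x) u := by
    ext (_ | p)
    · rfl
    · exact Fin.append_left u v p
  have hv : Sum.elim (fun _ : Fin 1 => x) (Fin.append u v) ∘ Sum.map id (Fin.natAdd m) =
      Sum.elim (fun _ => x) v := by
    ext (_ | p)
    · rfl
    · exact Fin.append_right u v p
  simp only [Real1, supAppend, Formula.realize_sup, Formula.realize_relabel, hu, hv]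

/-- Row `k` is `āₖ b̄ₖ`; `c` takes the even rows and `d` the odd ones, so the row `2i` chosen for
`φ` and the row `2j+1` chosen for `ψ` never clash with a row that must be omitted. -/
theorem IsICTPattern.supAppend_interleave {φ ψ : L.Formula (Fin 1 ⊕ Fin m)}
    {a b : ℕ → Fin m → M} (hict : IsICTPattern φ ψ a b) (i j : ℕ) (s : Finset ℕ) :
    ∃ x : M,
      Real1 (supAppend φ ψ) x (Fin.append (a (2 * i)) (b (2 * i))) ∧
      Real1 (supAppend φ ψ) x (Fin.append (a (2 * j + 1)) (b (2 * j + 1))) ∧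
      (∀ k ∈ s, k ≠ i →
        ¬ Real1 (supAppend φ ψ) x (Fin.append (a (2 * k)) (b (2 * k)))) ∧
      (∀ l ∈ s, l ≠ j →
        ¬ Real1 (supAppend φ ψ) x (Fin.append (a (2 * l + 1)) (b (2 * l + 1)))) := by
  classical
  set t := s.biUnion fun k => {2 * k, 2 * k + 1}
  have even_mem : ∀ k ∈ s, 2 * k ∈ t := fun k hk =>
    Finset.mem_biUnion.2 ⟨k, hk, by simp⟩
  have odd_mem : ∀ k ∈ s, 2 * k + 1 ∈ t := fun k hk =>
    Finset.mem_biUnion.2 ⟨k, hk, by simp⟩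
  obtain ⟨x, hφ, hψ, hnφ, hnψ⟩ := hict (2 * i) (2 * j + 1) t
  refine ⟨x, (real1_supAppend ..).2 (.inl hφ), (real1_supAppend ..).2 (.inr hψ),
    fun k hk hki => ?_, fun l hl hlj => ?_⟩
  · rw [real1_supAppend, not_or]
    exact ⟨hnφ _ (even_mem k hk) (by omega), hnψ _ (even_mem k hk) (by omega)⟩
  · rw [real1_supAppend, not_or]
    exact ⟨hnφ _ (odd_mem l hl) (by omega), hnψ _ (odd_mem l hl) (by omega)⟩

theorem single_formula_witness_general {L : FirstOrder.Language.{u, v}}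
    (T : L.Theory) (h : ¬ IsDpMinimal.{u, v, w} T) :
    ∃ (m : ℕ) (θ : L.Formula (Fin 1 ⊕ Fin m))
      (M : FirstOrder.Language.Theory.ModelType.{u, v, w} T)
      (c d : ℕ → Fin m → M),
      ∀ i j : ℕ, i ≠ j → ∀ s : Finset ℕ, ∃ x : M,
        Real1 θ x (c i) ∧ Real1 θ x (d j) ∧
        (∀ k ∈ s, k ≠ i → ¬ Real1 θ x (c k)) ∧
        (∀ l ∈ s, l ≠ j → ¬ Real1 θ x (d l)) := by
  simp only [IsDpMinimal, not_forall, not_not] at h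
  obtain ⟨M, _, _, hM, m, φ, ψ, a, b, hict⟩ := h
  exact ⟨m + m, supAppend φ ψ, ⟨M⟩, fun i => Fin.append (a (2 * i)) (b (2 * i)),
    fun j => Fin.append (a (2 * j + 1)) (b (2 * j + 1)),
    fun i j _ s => hict.supAppend_interleave i j s⟩

/-- If `T` is not dp-minimal, then a single formula `θ` witnesses this: there are sequences
`(c̄ᵢ)` and `(d̄ⱼ)` in some model such that for all `i ≠ j` the set
`{θ(x,c̄ᵢ), θ(x,d̄ⱼ)} ∪ {¬θ(x,c̄ₖ) : k ≠ i} ∪ {¬θ(x,d̄ₗ) : l ≠ j}` is consistent. -/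
theorem single_formula_witness {L : FirstOrder.Language.{u, v}}
    (T : L.Theory) (hT : T.IsComplete) (h : ¬ IsDpMinimal.{u, v, w} T) :
    ∃ (m : ℕ) (θ : L.Formula (Fin 1 ⊕ Fin m))
      (M : FirstOrder.Language.Theory.ModelType.{u, v, w} T)
      (c d : ℕ → Fin m → M),
      ∀ i j : ℕ, i ≠ j → ∀ s : Finset ℕ, ∃ x : M,
        Real1 θ x (c i) ∧ Real1 θ x (d j) ∧
        (∀ k ∈ s, k ≠ i → ¬ Real1 θ x (c k)) ∧
        (∀ l ∈ s, l ≠ j → ¬ Real1 θ x (d l)) :=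
  single_formula_witness_general T h

end DpMin
end

section
/- Let L be the language with unary predicate symbols Pᵢ for each i ∈ ω₁, and let T be the L-theory consisting of all sentences σ_{I,J,n} for finite disjoint I,J ⊆ ω₁ and n ∈ ℕ, where σ_{I,J,n} asserts that there exist at least n elements x with ⋀_{i∈I} Pᵢ(x) ∧ ⋀_{j∈J} ¬Pⱼ(x). Then T is not VC-minimal: for every model M of T there is no family Φ of L-formulas φ(x,ȳ) such that (i) for all φ(x,ȳ), ψ(x,ȳ) ∈ Φ and all tuples ā, b̄ from M, one of the four containments φ(M,ā) ⊆ ψ(M,b̄), ψ(M,b̄) ⊆ φ(M,ā), M∖φ(M,ā) ⊆ ψ(M,b̄), ψ(M,b̄) ⊆ M∖φ(M,ā) holds, and (ii) every set Pᵢ(M) = {x ∈ M : M ⊨ Pᵢ(x)}, i ∈ ω₁, is a finite Boolean combination (using finite unions, finite intersections, and complements) of instances φ(M,ā) with φ ∈ Φ and ā a tuple from M. -/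
/-!
Replacing each set of a directed family by whichever of it and its complement avoids a fixed
point `p` makes the family laminar (any two members are nested or disjoint), and `N` laminar
sets cut the universe into at most `N + 1` classes. Each `Pᵢ` is a Boolean combination of
finitely many instances, and since `ω₁` is uncountable, infinitely many `Pᵢ` use the same
number `n` of them. Taking `2n + 1` of these, `T` realizes all `2^(2n+1)` patterns of them,
which must lie in different classes of a laminar family of at most `(2n + 1) n` sets: too many.
-/

open FirstOrder Language Set

universe u v w

namespace DpMin

open Ordinal in
/-- The index set of the predicates: the first uncountable ordinal `ω₁`. -/
abbrev Omega1 : Type := (ω_ 1).ToType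

/-- The language with unary predicate symbols `Pᵢ` for `i ∈ ω₁` and no function symbols. -/
def LOmega : FirstOrder.Language where
  Functions := fun _ => Empty
  Relations := fun n =>
    match n with
    | 1 => Omega1
    | _ => Empty

/-- The sentence `σ_{I,J,n}`: there exist at least `n` (pairwise distinct) elements `x` with
`⋀_{i∈I} Pᵢ(x) ∧ ⋀_{j∈J} ¬Pⱼ(x)`. -/
noncomputable def sigmaSentence (I J : Finset Omega1) (n : ℕ) : LOmega.Sentence :=
  (((((List.finRange n ×ˢ List.finRange n).filter fun ij : _ × _ => ij.1 ≠ ij.2).map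
        fun ij : _ × _ => ∼((&ij.1).bdEqual &ij.2)) ++
      ((I.toList ×ˢ List.finRange n).map fun p : Omega1 × Fin n =>
        Relations.boundedFormula₁ (show LOmega.Relations 1 from p.1) (&p.2)) ++
      ((J.toList ×ˢ List.finRange n).map fun p : Omega1 × Fin n =>
        ∼(Relations.boundedFormula₁ (show LOmega.Relations 1 from p.1) (&p.2)))).foldr
    (· ⊓ ·) ⊤).exs

/-- The theory of the `σ_{I,J,n}` for disjoint finite `I, J ⊆ ω₁` and `n ∈ ℕ`. -/
def TOmega : LOmega.Theory :=
  {σ | ∃ (I J : Finset Omega1) (n : ℕ), Disjoint I J ∧ σ = sigmaSentence I J n}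

end DpMin

namespace DpMin

/-- Finite Boolean combinations of sets from a collection `S`. -/
inductive BoolComb {α : Type*} (S : Set (Set α)) : Set α → Prop
  | base {s : Set α} : s ∈ S → BoolComb S s
  | compl {s : Set α} : BoolComb S s → BoolComb S sᶜ
  | union {s t : Set α} : BoolComb S s → BoolComb S t → BoolComb S (s ∪ t)
  | inter {s t : Set α} : BoolComb S s → BoolComb S t → BoolComb S (s ∩ t)

/-- The instance `φ(M, ā)` of a formula `φ(x, ȳ)` at a parameter tuple `ā`. -/
def instSet {L : FirstOrder.Language.{u, v}} {M : Type w} [L.Structure M]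
    (φ : (m : ℕ) × L.Formula (Fin 1 ⊕ Fin m)) (a : Fin φ.1 → M) : Set M :=
  {x : M | φ.2.Realize (Sum.elim (fun _ => x) a)}

section SetFamilies

variable {α ι : Type*}

def IsDirectedPair (s t : Set α) : Prop :=
  s ⊆ t ∨ t ⊆ s ∨ sᶜ ⊆ t ∨ t ⊆ sᶜ

theorem IsDirectedPair.symm {s t : Set α} (h : IsDirectedPair s t) : IsDirectedPair t s := by
  unfold IsDirectedPair at h ⊢
  rw [compl_subset_comm, subset_compl_comm]
  tauto

theorem IsDirectedPair.compl_left {s t : Set α} (h : IsDirectedPair s t) :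
    IsDirectedPair sᶜ t := by
  unfold IsDirectedPair at h ⊢
  rw [_root_.compl_compl]
  tauto

theorem IsDirectedPair.compl_right {s t : Set α} (h : IsDirectedPair s t) :
    IsDirectedPair s tᶜ :=
  h.symm.compl_left.symm

theorem IsDirectedPair.subset_or_subset_or_disjoint {s t : Set α} {p : α}
    (h : IsDirectedPair s t) (hs : p ∉ s) (ht : p ∉ t) : s ⊆ t ∨ t ⊆ s ∨ Disjoint s t := by
  rw [← subset_compl_iff_disjoint_left]
  rcases h with h | h | h | h
  exacts [.inl h, .inr (.inl h), absurd (h hs) ht, .inr (.inr h)]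

noncomputable def avoid (p : α) (s : Set α) : Set α :=
  open Classical in if p ∈ s then sᶜ else s

theorem notMem_avoid (p : α) (s : Set α) : p ∉ avoid p s := by
  unfold avoid
  split_ifs with h
  exacts [not_not_intro h, h]

theorem mem_avoid_iff_mem_avoid {p x y : α} {s : Set α} :
    (x ∈ avoid p s ↔ y ∈ avoid p s) ↔ (x ∈ s ↔ y ∈ s) := by
  unfold avoid
  split_ifs
  exacts [not_iff_not, Iff.rfl]

theorem IsDirectedPair.avoid {s t : Set α} (h : IsDirectedPair s t) (p : α) :
    IsDirectedPair (avoid p s) (avoid p t) := by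
  unfold DpMin.avoid
  split_ifs
  exacts [h.compl_left.compl_right, h.compl_left, h.compl_right, h]

theorem BoolComb.exists_finset_determining {S : Set (Set α)} {t : Set α} (h : BoolComb S t) :
    ∃ F : Finset (Set α), ↑F ⊆ S ∧
      ∀ x y, (∀ s ∈ F, x ∈ s ↔ y ∈ s) → (x ∈ t ↔ y ∈ t) := by
  classical
  induction h with
  | @base s hs => exact ⟨{s}, by simpa using hs, fun x y h => h s (Finset.mem_singleton_self s)⟩
  | compl _ ih =>
    obtain ⟨F, hF, hd⟩ := ih
    exact ⟨F, hF, fun x y h => not_congr (hd x y h)⟩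
  | union _ _ ih₁ ih₂ =>
    obtain ⟨F₁, hF₁, hd₁⟩ := ih₁
    obtain ⟨F₂, hF₂, hd₂⟩ := ih₂
    refine ⟨F₁ ∪ F₂, by simpa using ⟨hF₁, hF₂⟩, fun x y h => or_congr ?_ ?_⟩
    exacts [hd₁ x y fun s hs => h s (Finset.mem_union_left _ hs),
      hd₂ x y fun s hs => h s (Finset.mem_union_right _ hs)]
  | inter _ _ ih₁ ih₂ =>
    obtain ⟨F₁, hF₁, hd₁⟩ := ih₁
    obtain ⟨F₂, hF₂, hd₂⟩ := ih₂
    refine ⟨F₁ ∪ F₂, by simpa using ⟨hF₁, hF₂⟩, fun x y h => and_congr ?_ ?_⟩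
    exacts [hd₁ x y fun s hs => h s (Finset.mem_union_left _ hs),
      hd₂ x y fun s hs => h s (Finset.mem_union_right _ hs)]

noncomputable def trace (G : Finset (Set α)) (x : α) : Finset (Set α) :=
  open Classical in G.filter (x ∈ ·)

theorem mem_trace {G : Finset (Set α)} {x : α} {s : Set α} : s ∈ trace G x ↔ s ∈ G ∧ x ∈ s := by
  classical
  simp [trace]

/-- The trace of a point on a laminar family is empty or determined by its least member. -/
theorem exists_traces_card_le_of_laminar {G : Finset (Set α)}
    (hG : ∀ s ∈ G, ∀ t ∈ G, s ⊆ t ∨ t ⊆ s ∨ Disjoint s t) :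
    ∃ R : Finset (Finset (Set α)), R.card ≤ G.card + 1 ∧ ∀ x, trace G x ∈ R := by
  classical
  refine ⟨insert ∅ (G.image fun s => G.filter (s ⊆ ·)),
    (Finset.card_insert_le _ _).trans (by gcongr; exact Finset.card_image_le), fun x => ?_⟩
  rcases (trace G x).eq_empty_or_nonempty with h | h
  · simp [h]
  obtain ⟨s, hs, hmin⟩ := Finset.exists_minimal h
  obtain ⟨hsG, hxs⟩ := mem_trace.mp hs
  refine Finset.mem_insert_of_mem (Finset.mem_image.mpr ⟨s, hsG, ?_⟩)
  ext t
  simp only [Finset.mem_filter, mem_trace, and_congr_right_iff]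
  intro htG
  refine ⟨fun hst => hst hxs, fun hxt => ?_⟩
  rcases hG s hsG t htG with hst | hts | hdisj
  exacts [hst, hmin (mem_trace.mpr ⟨htG, hxt⟩) hts, absurd hxt (hdisj.notMem_of_mem_left hxs)]

/-- Flipping every set to avoid a realized point makes the family laminar, and distinct
patterns on `t` then have distinct traces. -/
theorem two_pow_card_le_sum_card_add_one {S : Set (Set α)}
    (hS : ∀ s ∈ S, ∀ t ∈ S, IsDirectedPair s t) (P : ι → Set α) (F : ι → Finset (Set α))
    (hFS : ∀ i, ↑(F i) ⊆ S) (hPF : ∀ i x y, (∀ s ∈ F i, x ∈ s ↔ y ∈ s) → (x ∈ P i ↔ y ∈ P i))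
    (t : Finset ι) (hshatter : ∀ u ⊆ t, ∃ x, ∀ i ∈ t, x ∈ P i ↔ i ∈ u) :
    2 ^ t.card ≤ ∑ i ∈ t, (F i).card + 1 := by
  classical
  obtain ⟨p, -⟩ := hshatter ∅ (Finset.empty_subset t)
  have : Nonempty α := ⟨p⟩
  choose! x hx using hshatter
  set G := t.biUnion fun i => (F i).image (avoid p)
  have hG : ∀ s ∈ G, ∀ s' ∈ G, s ⊆ s' ∨ s' ⊆ s ∨ Disjoint s s' := by
    simp only [G, Finset.mem_biUnion, Finset.mem_image]
    rintro _ ⟨i, -, s, hs, rfl⟩ _ ⟨j, -, s', hs', rfl⟩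
    exact ((hS s (hFS i hs) s' (hFS j hs')).avoid p).subset_or_subset_or_disjoint
      (notMem_avoid p s) (notMem_avoid p s')
  have hinj : Set.InjOn (fun u => trace G (x u)) t.powerset := by
    intro u hu v hv huv
    rw [Finset.mem_coe, Finset.mem_powerset] at hu hv
    have hsame : ∀ i ∈ t, ∀ s ∈ F i, x u ∈ s ↔ x v ∈ s := fun i hi s hs => by
      have hsG : avoid p s ∈ G := Finset.mem_biUnion.mpr ⟨i, hi, Finset.mem_image_of_mem _ hs⟩
      have h := congrArg (avoid p s ∈ ·) huv
      simp only [mem_trace, hsG, true_and] at h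
      exact mem_avoid_iff_mem_avoid.mp (Iff.of_eq h)
    ext i
    by_cases hit : i ∈ t
    · exact (hx u hu i hit).symm.trans ((hPF i _ _ (hsame i hit)).trans (hx v hv i hit))
    · exact iff_of_false (fun h => hit (hu h)) (fun h => hit (hv h))
  obtain ⟨R, hRcard, hR⟩ := exists_traces_card_le_of_laminar hG
  calc 2 ^ t.card = t.powerset.card := (Finset.card_powerset t).symm
    _ ≤ R.card := Finset.card_le_card_of_injOn _ (fun u _ => hR (x u)) hinj
    _ ≤ G.card + 1 := hRcard
    _ ≤ ∑ i ∈ t, (F i).card + 1 := by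
      gcongr
      exact Finset.card_biUnion_le.trans (Finset.sum_le_sum fun i _ => Finset.card_image_le)

end SetFamilies

theorem exists_of_realize_sigmaSentence_one {M : Type w} [LOmega.Structure M]
    {I J : Finset Omega1} (h : M ⊨ sigmaSentence I J 1) :
    ∃ x : M, (∀ i ∈ I, Structure.RelMap (show LOmega.Relations 1 from i) ![x]) ∧
      ∀ j ∈ J, ¬ Structure.RelMap (show LOmega.Relations 1 from j) ![x] := by
  rw [sigmaSentence, Sentence.Realize, BoundedFormula.realize_exs] at h
  obtain ⟨xs, hxs⟩ := h
  rw [BoundedFormula.realize_foldr_inf] at hxs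
  refine ⟨xs 0, fun i hi => ?_, fun j hj => ?_⟩
  · have := hxs _ (List.mem_append_left _ (List.mem_append_right _ (List.mem_map_of_mem
      (List.pair_mem_product.mpr ⟨Finset.mem_toList.mpr hi, List.mem_finRange 0⟩))))
    rw [BoundedFormula.realize_rel₁] at this
    simpa using this
  · have := hxs _ (List.mem_append_right _ (List.mem_map_of_mem
      (List.pair_mem_product.mpr ⟨Finset.mem_toList.mpr hj, List.mem_finRange 0⟩)))
    rw [BoundedFormula.realize_not, BoundedFormula.realize_rel₁] at this
    simpa using this

theorem exists_forall_relMap_iff {M : Type w} [LOmega.Structure M] (hM : M ⊨ TOmega)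
    (S U : Finset Omega1) :
    ∃ x : M, ∀ i ∈ S, Structure.RelMap (show LOmega.Relations 1 from i) ![x] ↔ i ∈ U := by
  classical
  obtain ⟨x, hI, hJ⟩ := exists_of_realize_sigmaSentence_one
    (hM.realize_of_mem _ ⟨S ∩ U, S \ U, 1, (Finset.disjoint_sdiff_inter S U).symm, rfl⟩)
  exact ⟨x, fun i hi =>
    ⟨fun hx => by_contra fun hiU => hJ i (Finset.mem_sdiff.mpr ⟨hi, hiU⟩) hx,
      fun hiU => hI i (Finset.mem_inter.mpr ⟨hi, hiU⟩)⟩⟩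

theorem exists_infinite_fiber_omega1 (f : Omega1 → ℕ) : ∃ n, (f ⁻¹' {n}).Infinite := by
  have hcard : Cardinal.mk ℕ < Cardinal.mk Omega1 := by
    rw [Cardinal.mk_nat, Cardinal.mk_toType, Ordinal.card_omega]
    exact Cardinal.aleph0_lt_aleph_one
  obtain ⟨n, hn⟩ := Cardinal.exists_infinite_fiber' f hcard
  exact ⟨n, Set.infinite_coe_iff.mp hn⟩

theorem mul_add_one_lt_two_pow (n : ℕ) : (2 * n + 1) * n + 1 < 2 ^ (2 * n + 1) := by
  have h : n < 2 ^ n := Nat.lt_two_pow_self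
  have h2 : 2 ^ (2 * n + 1) = 2 * (2 ^ n * 2 ^ n) := by ring
  nlinarith

/-- The theory `TOmega` is not VC-minimal: in no model is there a family `Φ` of formulas whose
instances are pairwise compatible (one of the four containments always holds) and generate every
predicate `Pᵢ` by finite Boolean combinations. -/
theorem TOmega_not_vcMinimal :
    ∀ (M : Type w) [LOmega.Structure M] [Nonempty M], M ⊨ TOmega →
      ¬ ∃ Φ : Set ((m : ℕ) × LOmega.Formula (Fin 1 ⊕ Fin m)),
        (∀ φ ∈ Φ, ∀ ψ ∈ Φ, ∀ (a : Fin φ.1 → M) (b : Fin ψ.1 → M),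
          instSet φ a ⊆ instSet ψ b ∨ instSet ψ b ⊆ instSet φ a ∨
          (instSet φ a)ᶜ ⊆ instSet ψ b ∨ instSet ψ b ⊆ (instSet φ a)ᶜ) ∧
        (∀ i : Omega1,
          BoolComb {s : Set M | ∃ φ ∈ Φ, ∃ a : Fin φ.1 → M, s = instSet φ a}
            {x : M | Structure.RelMap (show LOmega.Relations 1 from i) ![x]}) := by
  intro M _ _ hM ⟨Φ, hdir, hgen⟩
  choose F hFΦ hPF using fun i => (hgen i).exists_finset_determining
  obtain ⟨n, hn⟩ := exists_infinite_fiber_omega1 fun i => (F i).card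
  obtain ⟨t, htn, ht⟩ := hn.exists_subset_card_eq (2 * n + 1)
  have hbound := two_pow_card_le_sum_card_add_one
    (by rintro _ ⟨φ, hφ, a, rfl⟩ _ ⟨ψ, hψ, b, rfl⟩; exact hdir φ hφ ψ hψ a b) _ F hFΦ hPF t
    fun u _ => exists_forall_relMap_iff hM t u
  rw [Finset.sum_const_nat fun i hi => htn hi, ht] at hbound
  exact (mul_add_one_lt_two_pow n).not_ge hbound

end DpMin
end

section
/- Every weakly o-minimal complete theory is dp-minimal: if L is a language containing a binary relation symbol <, and T is a complete L-theory such that in every model of T the symbol < is interpreted as a linear order and every subset of the model definable with parameters by an L-formula in one free variable is a finite union of <-convex sets, then no model of T admits an ICT pattern. -/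
/-!
An ICT pattern of depth `n` gives `n²` points `P (i, j)` satisfying `φ(x, aᵢ) ∧ ψ(x, bⱼ)` and no
other of the first `n` instances of `φ` and `ψ`. List them in increasing order: each point starts
a new maximal run of its `φ`-row or of its `ψ`-column, for otherwise its predecessor would lie in
the same row and column. Weak o-minimality, applied in an ultrapower, bounds the number of times a
set `φ(M, ā)` alternates by some `K` independent of `ā`; so there are at most `K` runs per row and
per column, whence `n² ≤ 2nK`, which fails for `n > 2K`.
-/

open FirstOrder Language Set

universe u v w

namespace DpMin

/-- A subset of a structure is convex with respect to a binary relation `r` (thought of as `<`):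
it contains any point lying between two of its points. -/
def ConvexRel {M : Type w} (r : M → M → Prop) (X : Set M) : Prop :=
  ∀ a ∈ X, ∀ c ∈ X, ∀ b : M, (r a b ∨ a = b) → (r b c ∨ b = c) → b ∈ X

open scoped Finset

def Alternates {α : Type*} (r : α → α → Prop) (S : Set α) (K : ℕ) : Prop :=
  ∃ w z : ℕ → α, ∀ s < K, r (w s) (z s) ∧ r (z s) (w (s + 1)) ∧ w s ∈ S ∧ z s ∉ S

section LinearOrder

variable {α : Type*} [LinearOrder α]

lemma ConvexRel.ordConnected {C : Set α} (h : ConvexRel (· < ·) C) : C.OrdConnected :=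
  ⟨fun _ ha _ hc _ hb => h _ ha _ hc _ hb.1.lt_or_eq hb.2.lt_or_eq⟩

lemma not_alternates_iUnion {N : ℕ} {C : Fin N → Set α} (hC : ∀ i, (C i).OrdConnected) :
    ¬ Alternates (· < ·) (⋃ i, C i) (N + 1) := by
  rintro ⟨w, z, hwz⟩
  have hw : StrictMonoOn w (Set.Iic N) := strictMonoOn_Iic_of_lt_succ fun s hs =>
    (hwz s (by omega)).1.trans (hwz s (by omega)).2.1
  choose g hg using fun s : Fin (N + 1) => mem_iUnion.1 (hwz s s.isLt).2.2.1
  obtain ⟨s, s', hne, heq⟩ := Fintype.exists_ne_map_eq_of_card_lt g (by simp)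
  wlog hlt : s < s' generalizing s s'
  · exact this s' s hne.symm heq.symm (hne.lt_or_gt.resolve_left hlt)
  obtain ⟨hwz', hzw, -, hz⟩ := hwz s s.isLt
  have := s'.isLt
  have hle : w (s + 1) ≤ w s' :=
    hw.monotoneOn (mem_Iic.2 (by omega)) (mem_Iic.2 (by omega)) (by simpa using hlt)
  exact hz (mem_iUnion.2 ⟨g s, (hC (g s)).out (hg s) (heq ▸ hg s') ⟨hwz'.le, hzw.le.trans hle⟩⟩)

/-- The first points of the maximal runs of consecutive points of `G` lying in `S`. -/
noncomputable def blockStarts (G : Finset α) (S : Set α) : Finset α :=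
  open scoped Classical in
  {x ∈ G | x ∈ S ∧ ∀ y ∈ G, y < x → y ∈ S → ∃ z ∈ G, y < z ∧ z < x ∧ z ∉ S}

lemma mem_blockStarts {G : Finset α} {S : Set α} {x : α} :
    x ∈ blockStarts G S ↔
      x ∈ G ∧ x ∈ S ∧ ∀ y ∈ G, y < x → y ∈ S → ∃ z ∈ G, y < z ∧ z < x ∧ z ∉ S := by
  simp [blockStarts]

lemma card_blockStarts_le {G : Finset α} {S : Set α} {K : ℕ}
    (hS : ¬ Alternates (· < ·) S K) : #(blockStarts G S) ≤ K := by
  by_contra! hK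
  let e := (blockStarts G S).orderIsoOfFin rfl
  let w : ℕ → α := fun s => e ⟨min s K, by omega⟩
  have hw : ∀ s, w s ∈ blockStarts G S := fun s => (e _).2
  have hgap : ∀ s < K, ∃ z, w s < z ∧ z < w (s + 1) ∧ z ∉ S := by
    intro s hs
    have hlt : w s < w (s + 1) := e.strictMono (Fin.mk_lt_mk.2 (by omega))
    obtain ⟨z, -, hz⟩ :=
      (mem_blockStarts.1 (hw (s + 1))).2.2 _ (mem_blockStarts.1 (hw s)).1 hlt
        (mem_blockStarts.1 (hw s)).2.1
    exact ⟨z, hz⟩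
  have : Nonempty α := ⟨w 0⟩
  choose! z hz using hgap
  exact hS ⟨w, z, fun s hs => ⟨(hz s hs).1, (hz s hs).2.1, (mem_blockStarts.1 (hw s)).2.1,
    (hz s hs).2.2⟩⟩

lemma mem_blockStarts_or_mem_blockStarts {G : Finset α} {S T : Set α} {x : α} (hx : x ∈ G)
    (hS : x ∈ S) (hT : x ∈ T) (huniq : ∀ y ∈ G, y ∈ S → y ∈ T → y = x) :
    x ∈ blockStarts G S ∨ x ∈ blockStarts G T := by
  simp only [mem_blockStarts, hx, hS, hT, true_and]
  by_contra! h
  obtain ⟨⟨y₁, hy₁G, hy₁x, hy₁S, h₁⟩, ⟨y₂, hy₂G, hy₂x, hy₂T, h₂⟩⟩ := h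
  rcases le_total y₁ y₂ with hle | hle
  · have hy₂S : y₂ ∈ S := hle.lt_or_eq.elim (h₁ y₂ hy₂G · hy₂x) (· ▸ hy₁S)
    exact hy₂x.ne (huniq y₂ hy₂G hy₂S hy₂T)
  · have hy₁T : y₁ ∈ T := hle.lt_or_eq.elim (h₂ y₁ hy₁G · hy₁x) (· ▸ hy₂T)
    exact hy₁x.ne (huniq y₁ hy₁G hy₁S hy₁T)

lemma card_mul_card_le_of_not_alternates {ι κ : Type*} [Fintype ι] [Fintype κ]
    {S : ι → Set α} {T : κ → Set α} {K₁ K₂ : ℕ} (hS : ∀ i, ¬ Alternates (· < ·) (S i) K₁)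
    (hT : ∀ j, ¬ Alternates (· < ·) (T j) K₂) (P : ι × κ → α)
    (hPS : ∀ p i, P p ∈ S i ↔ p.1 = i) (hPT : ∀ p j, P p ∈ T j ↔ p.2 = j) :
    Fintype.card ι * Fintype.card κ ≤ Fintype.card ι * K₁ + Fintype.card κ * K₂ := by
  classical
  have hP : ∀ p q, P q ∈ S p.1 → P q ∈ T p.2 → q = p := fun p q hS hT =>
    Prod.ext ((hPS q _).1 hS) ((hPT q _).1 hT)
  set G := Finset.univ.image P
  have hcover : G ⊆ (Finset.univ.biUnion fun i => blockStarts G (S i)) ∪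
      Finset.univ.biUnion fun j => blockStarts G (T j) := by
    intro x hx
    obtain ⟨p, -, rfl⟩ := Finset.mem_image.1 hx
    have huniq : ∀ y ∈ G, y ∈ S p.1 → y ∈ T p.2 → y = P p := by
      rintro _ hy hyS hyT
      obtain ⟨q, -, rfl⟩ := Finset.mem_image.1 hy
      rw [hP p q hyS hyT]
    rcases mem_blockStarts_or_mem_blockStarts hx ((hPS p _).2 rfl) ((hPT p _).2 rfl) huniq
      with h | h
    · exact Finset.mem_union_left _ (Finset.mem_biUnion.2 ⟨p.1, Finset.mem_univ _, h⟩)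
    · exact Finset.mem_union_right _ (Finset.mem_biUnion.2 ⟨p.2, Finset.mem_univ _, h⟩)
  have hinj : Function.Injective P := fun p q hpq =>
    (hP p q (hpq ▸ (hPS p _).2 rfl) (hpq ▸ (hPT p _).2 rfl)).symm
  calc Fintype.card ι * Fintype.card κ = #G := by
        rw [Finset.card_image_of_injective _ hinj, Finset.card_univ, Fintype.card_prod]
    _ ≤ ∑ i, #(blockStarts G (S i)) + ∑ j, #(blockStarts G (T j)) :=
        (Finset.card_le_card hcover).trans ((Finset.card_union_le _ _).trans
          (add_le_add Finset.card_biUnion_le Finset.card_biUnion_le))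
    _ ≤ Fintype.card ι * K₁ + Fintype.card κ * K₂ := by
        gcongr
        · exact (Finset.sum_le_card_nsmul _ _ _ fun i _ => card_blockStarts_le (hS i)).trans_eq
            (by simp)
        · exact (Finset.sum_le_card_nsmul _ _ _ fun j _ => card_blockStarts_le (hT j)).trans_eq
            (by simp)

end LinearOrder

section Ultrapower

abbrev Ultrapower (U : Ultrafilter ℕ) (M : Type w) : Type w :=
  (U : Filter ℕ).Product fun _ : ℕ => M

variable {L : FirstOrder.Language.{u, v}} {M : Type w} [L.Structure M] (U : Ultrafilter ℕ)

lemma ultrapower_model [Nonempty M] {T : L.Theory} (hM : M ⊨ T) : Ultrapower U M ⊨ T := by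
  rw [Theory.model_iff]
  exact fun σ hσ => (Ultraproduct.sentence_realize σ).2
    (Filter.Eventually.of_forall fun _ => T.realize_sentence_of_mem hσ)

lemma ultrapower_relMap_cast (r : L.Relations 2) (f g : ℕ → M) :
    Structure.RelMap r ![(f : Ultrapower U M), (g : Ultrapower U M)] ↔
      ∀ᶠ k in (U : Filter ℕ), Structure.RelMap r ![f k, g k] := by
  have hcast : ![(f : Ultrapower U M), (g : Ultrapower U M)] =
      fun i => (⟦![f, g] i⟧ : Ultrapower U M) := by
    funext i; fin_cases i <;> rfl
  rw [hcast, relMap_quotient_mk']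
  refine Filter.eventually_congr (Filter.Eventually.of_forall fun k => ?_)
  have hk : (fun i => ![f, g] i k) = ![f k, g k] := by funext i; fin_cases i <;> rfl
  rw [← hk]

lemma ultrapower_real1_cast [Nonempty M] {m : ℕ} (φ : L.Formula (Fin 1 ⊕ Fin m)) (f : ℕ → M)
    (a : ℕ → Fin m → M) :
    Real1 φ (f : Ultrapower U M) (fun v => ((fun k => a k v : ℕ → M) : Ultrapower U M)) ↔
      ∀ᶠ k in (U : Filter ℕ), Real1 φ (f k) (a k) := by
  have hcast : Sum.elim (fun _ => (f : Ultrapower U M))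
      (fun v => ((fun k => a k v : ℕ → M) : Ultrapower U M)) =
      fun i : Fin 1 ⊕ Fin m => ((fun k => Sum.elim (fun _ => f k) (a k) i : ℕ → M) :
        Ultrapower U M) := by
    funext i; cases i <;> rfl
  exact (congrArg φ.Realize hcast).to_iff.trans (Ultraproduct.realize_formula_cast φ _)

/-- Otherwise instances of `φ` alternating `K` times, for every `K`, glue in an ultrapower to a
single instance alternating unboundedly. -/
theorem exists_forall_not_alternates [Nonempty M] (lt : L.Relations 2) {T : L.Theory} {m : ℕ}
    {φ : L.Formula (Fin 1 ⊕ Fin m)}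
    (hbound : ∀ (N : Type w) [L.Structure N] [Nonempty N], N ⊨ T → ∀ a : Fin m → N,
      ∃ K, ¬ Alternates (fun x y : N => Structure.RelMap lt ![x, y]) {x | Real1 φ x a} K)
    (hM : M ⊨ T) :
    ∃ K, ∀ a : Fin m → M,
      ¬ Alternates (fun x y : M => Structure.RelMap lt ![x, y]) {x | Real1 φ x a} K := by
  by_contra! h
  choose a w z hwz using h
  let U := Filter.hyperfilter ℕ
  obtain ⟨K, hK⟩ := hbound (Ultrapower U M) (ultrapower_model U hM)
    fun v => ((fun k => a k v : ℕ → M) : Ultrapower U M)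
  refine hK ⟨fun s => ((fun k => w k s : ℕ → M) : Ultrapower U M),
    fun s => ((fun k => z k s : ℕ → M) : Ultrapower U M), fun s _ => ?_⟩
  have hlarge : ∀ᶠ k in (U : Filter ℕ), s < k :=
    Nat.hyperfilter_le_atTop (Filter.eventually_gt_atTop s)
  refine ⟨(ultrapower_relMap_cast U lt _ _).2 (hlarge.mono fun k hk => (hwz k s hk).1),
    (ultrapower_relMap_cast U lt _ _).2 (hlarge.mono fun k hk => (hwz k s hk).2.1),
    (ultrapower_real1_cast U φ _ a).2 (hlarge.mono fun k hk => (hwz k s hk).2.2.1), fun hz => ?_⟩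
  obtain ⟨k, hk, hzk⟩ := (hlarge.and ((ultrapower_real1_cast U φ _ a).1 hz)).exists
  exact (hwz k s hk).2.2.2 hzk

end Ultrapower

lemma IsICTPattern.exists_grid {L : FirstOrder.Language.{u, v}} {M : Type w} [L.Structure M]
    {m : ℕ} {φ ψ : L.Formula (Fin 1 ⊕ Fin m)} {a b : ℕ → Fin m → M} (h : IsICTPattern φ ψ a b)
    (n : ℕ) : ∃ P : Fin n × Fin n → M, (∀ p (i : Fin n), Real1 φ (P p) (a i) ↔ p.1 = i) ∧
      ∀ p (j : Fin n), Real1 ψ (P p) (b j) ↔ p.2 = j := by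
  choose P hPφ hPψ hPφ' hPψ' using fun p : Fin n × Fin n => h p.1 p.2 (Finset.range n)
  refine ⟨P, fun p i => ⟨fun hi => ?_, fun hi => hi ▸ hPφ p⟩,
    fun p j => ⟨fun hj => ?_, fun hj => hj ▸ hPψ p⟩⟩
  · by_contra hne
    exact hPφ' p i (by simp) (fun hv => hne (Fin.ext hv).symm) hi
  · by_contra hne
    exact hPψ' p j (by simp) (fun hv => hne (Fin.ext hv).symm) hj

theorem dpMinimal_of_weaklyOMinimal_general {L : FirstOrder.Language.{u, v}}
    (lt : L.Relations 2) (T : L.Theory)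
    (hlin : ∀ (M : Type w) [L.Structure M] [Nonempty M], M ⊨ T →
      IsStrictTotalOrder M (fun x y : M => Structure.RelMap lt ![x, y]))
    (hwom : ∀ (M : Type w) [L.Structure M] [Nonempty M], M ⊨ T →
      ∀ (m : ℕ) (φ : L.Formula (Fin 1 ⊕ Fin m)) (a : Fin m → M),
        ∃ (N : ℕ) (C : Fin N → Set M),
          (∀ i, ConvexRel (fun x y : M => Structure.RelMap lt ![x, y]) (C i)) ∧
          {x : M | Real1 φ x a} = ⋃ i, C i) :
    IsDpMinimal.{u, v, w} T := by
  classical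
  have hbound : ∀ {m} (θ : L.Formula (Fin 1 ⊕ Fin m)) (N : Type w) [L.Structure N] [Nonempty N],
      N ⊨ T → ∀ c : Fin m → N,
        ∃ K, ¬ Alternates (fun x y : N => Structure.RelMap lt ![x, y]) {x | Real1 θ x c} K := by
    intro m θ N _ _ hN c
    obtain ⟨K, C, hC, hθ⟩ := hwom N hN m θ c
    let := @linearOrderOfSTO _ _ (hlin N hN) _
    exact ⟨K + 1, hθ ▸ not_alternates_iUnion fun i => (hC i).ordConnected⟩
  rintro M _ _ hM ⟨m, φ, ψ, a, b, hICT⟩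
  obtain ⟨Kφ, hKφ⟩ := exists_forall_not_alternates lt (hbound φ) hM
  obtain ⟨Kψ, hKψ⟩ := exists_forall_not_alternates lt (hbound ψ) hM
  let := @linearOrderOfSTO _ _ (hlin M hM) _
  obtain ⟨P, hPφ, hPψ⟩ := hICT.exists_grid (Kφ + Kψ + 1)
  have hcount := card_mul_card_le_of_not_alternates
    (S := fun i : Fin (Kφ + Kψ + 1) => {x | Real1 φ x (a i)})
    (T := fun j : Fin (Kφ + Kψ + 1) => {x | Real1 ψ x (b j)})
    (fun i => hKφ (a i)) (fun j => hKψ (b j)) P hPφ hPψ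
  simp only [Fintype.card_fin] at hcount
  nlinarith

/-- Every weakly o-minimal complete theory is dp-minimal: if `<` is a (strict) linear order in
every model and every set definable with parameters in one free variable is a finite union of
convex sets, then no model admits an ICT pattern. -/
theorem dpMinimal_of_weaklyOMinimal {L : FirstOrder.Language.{u, v}}
    (lt : L.Relations 2) (T : L.Theory) (hT : T.IsComplete)
    (hlin : ∀ (M : Type w) [L.Structure M] [Nonempty M], M ⊨ T →
      IsStrictTotalOrder M (fun x y : M => Structure.RelMap lt ![x, y]))
    (hwom : ∀ (M : Type w) [L.Structure M] [Nonempty M], M ⊨ T →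
      ∀ (m : ℕ) (φ : L.Formula (Fin 1 ⊕ Fin m)) (a : Fin m → M),
        ∃ (N : ℕ) (C : Fin N → Set M),
          (∀ i, ConvexRel (fun x y : M => Structure.RelMap lt ![x, y]) (C i)) ∧
          {x : M | Real1 φ x a} = ⋃ i, C i) :
    IsDpMinimal.{u, v, w} T :=
  dpMinimal_of_weaklyOMinimal_general lt T hlin hwom

end DpMin
end

section
/- Let L be the language with a binary function symbol +, a binary relation symbol <, a constant symbol 0, a unary function symbol f, and unary function symbols λ_q for each q ∈ ℚ. Let 𝔐 be the L-structure with universe ℚ × ℚ, where < is the lexicographic order, + is componentwise addition, 0 is (0,0), f((a,b)) = (−a,b), and λ_q((a,b)) = (qa,qb). Then Th(𝔐) admits quantifier elimination: for every L-formula φ(x̄) there is a quantifier-free L-formula ψ(x̄) such that 𝔐 ⊨ ∀x̄ (φ(x̄) ↔ ψ(x̄)). -/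
open FirstOrder Language Set

namespace DpMin

/-- The language with a binary function `+`, a binary relation `<`, a constant `0`, a unary
function `f`, and unary functions `λ_q` for each `q ∈ ℚ`. -/
def LQQ : FirstOrder.Language where
  Functions := fun n =>
    match n with
    | 0 => Unit
    | 1 => Unit ⊕ ℚ
    | 2 => Unit
    | _ => Empty
  Relations := fun n =>
    match n with
    | 2 => Unit
    | _ => Empty

/-- The structure `𝔐 = ⟨ℚ × ℚ, <_lex, +, (0,0), f, λ_q⟩_{q ∈ ℚ}` where `<` is the lexicographic
order, `+` is componentwise addition, `f((a,b)) = (−a,b)` and `λ_q((a,b)) = (qa,qb)`. -/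
instance instLQQStructure : LQQ.Structure (ℚ × ℚ) where
  funMap {n} :=
    match n with
    | 0 => fun _ _ => ((0 : ℚ), (0 : ℚ))
    | 1 => fun F x =>
        match F with
        | Sum.inl _ => (-(x 0).1, (x 0).2)
        | Sum.inr q => (q * (x 0).1, q * (x 0).2)
    | 2 => fun _ x => ((x 0).1 + (x 1).1, (x 0).2 + (x 1).2)
    | (_ + 3) => fun F _ => F.elim
  RelMap {n} :=
    match n with
    | 0 => fun R _ => R.elim
    | 1 => fun R _ => R.elim
    | 2 => fun _ x => (x 0).1 < (x 1).1 ∨ ((x 0).1 = (x 1).1 ∧ (x 0).2 < (x 1).2)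
    | (_ + 3) => fun R _ => R.elim

end DpMin

/-!
The maps `x ↦ (x - f x) / 2` and `x ↦ (x + f x) / 2` are term-definable projections onto
`ℚ × 0` and `0 × ℚ`. Hence every term denotes a pair of linear forms, one in the first and one in
the second coordinates of the variables, and every atomic formula is a Boolean combination of
linear equations `L = 0` and strict inequalities `L < 0` that each involve only first or only
second coordinates: `s = t` iff both coordinates of `s - t` vanish, and `s < t` iff the first
coordinate of `s - t` is negative, or it vanishes and the second one is negative. Conversely, each
such constraint is expressed by an atomic formula. Boolean combinations of these constraints,
written in disjunctive normal form, are closed under projection along one variable: an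
existential quantifier over a pair splits into independent quantifiers over its two coordinates,
and each is eliminated by Fourier–Motzkin.
-/

lemma dotProduct_snoc {K : Type*} [CommRing K] {m : ℕ} (c : Fin (m + 1) → K) (u : Fin m → K)
    (x : K) : c ⬝ᵥ Fin.snoc u x = Fin.init c ⬝ᵥ u + c (Fin.last m) * x := by
  simp [dotProduct, Fin.sum_univ_castSucc, Fin.init]

lemma Fin.mem_image_init_iff {α : Type*} {m : ℕ} {S : Set (Fin (m + 1) → α)} {v : Fin m → α} :
    v ∈ Fin.init '' S ↔ ∃ x, Fin.snoc v x ∈ S := by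
  constructor
  · rintro ⟨w, hw, rfl⟩
    exact ⟨w (Fin.last m), by rwa [Fin.snoc_init_self]⟩
  · rintro ⟨x, hx⟩
    exact ⟨_, hx, Fin.init_snoc _ _⟩

structure LinearConstraint (ι K : Type*) where
  coeff : ι → K
  strict : Bool

namespace LinearConstraint

variable {ι K : Type*} [Field K] [LinearOrder K]

section

variable [Fintype ι]

def Holds (a : LinearConstraint ι K) (u : ι → K) : Prop :=
  bif a.strict then a.coeff ⬝ᵥ u < 0 else a.coeff ⬝ᵥ u = 0

def flipStrict (a : LinearConstraint ι K) : LinearConstraint ι K := ⟨a.coeff, !a.strict⟩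

def positive (a : LinearConstraint ι K) : LinearConstraint ι K := ⟨-a.coeff, true⟩

lemma not_holds_iff [IsStrictOrderedRing K] (a : LinearConstraint ι K) (u : ι → K) :
    ¬ a.Holds u ↔ a.flipStrict.Holds u ∨ a.positive.Holds u := by
  rcases a with ⟨c, _ | _⟩
  · simp [Holds, flipStrict, positive, neg_dotProduct]
  · simp [Holds, flipStrict, positive, neg_dotProduct, le_iff_eq_or_lt, eq_comm]

end

variable {m : ℕ} {a a₀ b : LinearConstraint (Fin (m + 1)) K} {u : Fin m → K} {x : K}

def lastCoeff (a : LinearConstraint (Fin (m + 1)) K) : K := a.coeff (Fin.last m)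

def restrict (a : LinearConstraint (Fin (m + 1)) K) : LinearConstraint (Fin m) K :=
  ⟨Fin.init a.coeff, a.strict⟩

lemma holds_snoc_iff_restrict (h : a.lastCoeff = 0) :
    a.Holds (Fin.snoc u x) ↔ a.restrict.Holds u := by
  simp_all [Holds, restrict, lastCoeff, dotProduct_snoc]

/-- The constraint `a` with the last variable replaced by the value the equation `a₀` forces. -/
def substitute (a₀ a : LinearConstraint (Fin (m + 1)) K) : LinearConstraint (Fin m) K :=
  ⟨Fin.init a.coeff - (a.lastCoeff / a₀.lastCoeff) • Fin.init a₀.coeff, a.strict⟩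

lemma holds_substitute_iff (ha₀ : a₀.lastCoeff ≠ 0) (h₀ : a₀.coeff ⬝ᵥ Fin.snoc u x = 0) :
    (a₀.substitute a).Holds u ↔ a.Holds (Fin.snoc u x) := by
  have : (a₀.substitute a).coeff ⬝ᵥ u = a.coeff ⬝ᵥ Fin.snoc u x := by
    rw [dotProduct_snoc] at h₀ ⊢
    simp only [substitute, lastCoeff, sub_dotProduct, smul_dotProduct, smul_eq_mul] at ha₀ ⊢
    field_simp
    linear_combination (-a.coeff (Fin.last m)) * h₀
  simp only [Holds, this]
  rfl

theorem exists_elim_of_eq {l : List (LinearConstraint (Fin (m + 1)) K)} (ha₀l : a₀ ∈ l)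
    (hs : a₀.strict = false) (ha₀ : a₀.lastCoeff ≠ 0) (u : Fin m → K) :
    (∀ a ∈ l.map a₀.substitute, a.Holds u) ↔ ∃ x, ∀ a ∈ l, a.Holds (Fin.snoc u x) := by
  simp only [List.forall_mem_map]
  constructor
  · intro h
    have h₀ : a₀.coeff ⬝ᵥ Fin.snoc u (-(Fin.init a₀.coeff ⬝ᵥ u) / a₀.lastCoeff) = 0 := by
      rw [dotProduct_snoc, lastCoeff] at *
      field_simp
      ring
    exact ⟨_, fun a ha => (holds_substitute_iff ha₀ h₀).1 (h a ha)⟩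
  · rintro ⟨x, hx⟩ a ha
    have h₀ : a₀.coeff ⬝ᵥ Fin.snoc u x = 0 := by simpa [Holds, hs] using hx a₀ ha₀l
    exact (holds_substitute_iff ha₀ h₀).2 (hx a ha)

def threshold (a : LinearConstraint (Fin (m + 1)) K) (u : Fin m → K) : K :=
  -(Fin.init a.coeff ⬝ᵥ u) / a.lastCoeff

/-- The strict constraint saying that the lower bound on the last variable given by `a` lies
below the upper bound given by `b`. -/
def combine (a b : LinearConstraint (Fin (m + 1)) K) : LinearConstraint (Fin m) K :=
  ⟨b.lastCoeff • Fin.init a.coeff - a.lastCoeff • Fin.init b.coeff, true⟩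

variable [IsStrictOrderedRing K]

lemma holds_snoc_iff_threshold_lt (hs : a.strict) (h : a.lastCoeff < 0) :
    a.Holds (Fin.snoc u x) ↔ a.threshold u < x := by
  simp only [Holds, hs, cond_true, dotProduct_snoc, ← lastCoeff.eq_1, threshold,
    div_lt_iff_of_neg h]
  constructor <;> intro <;> linarith

lemma holds_snoc_iff_lt_threshold (hs : a.strict) (h : 0 < a.lastCoeff) :
    a.Holds (Fin.snoc u x) ↔ x < a.threshold u := by
  simp only [Holds, hs, cond_true, dotProduct_snoc, ← lastCoeff.eq_1, threshold, lt_div_iff₀ h]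
  constructor <;> intro <;> linarith

lemma holds_combine_iff (ha : a.lastCoeff < 0) (hb : 0 < b.lastCoeff) :
    (a.combine b).Holds u ↔ a.threshold u < b.threshold u := by
  simp only [Holds, combine, cond_true, sub_dotProduct, smul_dotProduct, smul_eq_mul, threshold]
  rw [← neg_div_neg_eq, neg_neg, div_lt_div_iff₀ (neg_pos.2 ha) hb]
  constructor <;> intro <;> linarith

lemma forall_holds_snoc_iff {l : List (LinearConstraint (Fin (m + 1)) K)}
    (hl : ∀ a ∈ l, a.lastCoeff ≠ 0 → a.strict) (u : Fin m → K) (x : K) :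
    (∀ a ∈ l, a.Holds (Fin.snoc u x)) ↔
      (∀ a ∈ l.filter (·.lastCoeff = 0), a.restrict.Holds u) ∧
      (∀ a ∈ l.filter (·.lastCoeff < 0), a.threshold u < x) ∧
      ∀ a ∈ l.filter (0 < ·.lastCoeff), x < a.threshold u := by
  simp only [List.mem_filter, decide_eq_true_eq, and_imp]
  constructor
  · intro h
    exact ⟨fun a ha h0 => (holds_snoc_iff_restrict h0).1 (h a ha),
      fun a ha hneg => (holds_snoc_iff_threshold_lt (hl a ha hneg.ne) hneg).1 (h a ha),
      fun a ha hpos => (holds_snoc_iff_lt_threshold (hl a ha hpos.ne') hpos).1 (h a ha)⟩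
  · rintro ⟨hflat, hlower, hupper⟩ a ha
    rcases lt_trichotomy a.lastCoeff 0 with hneg | h0 | hpos
    · exact (holds_snoc_iff_threshold_lt (hl a ha hneg.ne) hneg).2 (hlower a ha hneg)
    · exact (holds_snoc_iff_restrict h0).2 (hflat a ha h0)
    · exact (holds_snoc_iff_lt_threshold (hl a ha hpos.ne') hpos).2 (hupper a ha hpos)

theorem exists_elim_of_strict {l : List (LinearConstraint (Fin (m + 1)) K)}
    (hl : ∀ a ∈ l, a.lastCoeff ≠ 0 → a.strict) :
    ∃ l' : List (LinearConstraint (Fin m) K), ∀ u,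
      (∀ a ∈ l', a.Holds u) ↔ ∃ x, ∀ a ∈ l, a.Holds (Fin.snoc u x) := by
  set lower := l.filter (·.lastCoeff < 0)
  set upper := l.filter (0 < ·.lastCoeff)
  refine ⟨(l.filter (·.lastCoeff = 0)).map restrict ++
    (lower ×ˢ upper).map (fun p => p.1.combine p.2), fun u => ?_⟩
  have hpairs : (∀ p ∈ lower ×ˢ upper, (p.1.combine p.2).Holds u) ↔
      ∀ s ∈ (lower.map (·.threshold u)).toFinset, ∀ t ∈ (upper.map (·.threshold u)).toFinset,
        s < t := by
    simp only [List.mem_toFinset, List.forall_mem_map, Prod.forall, List.mem_product, and_imp]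
    have hcomb : ∀ a ∈ lower, ∀ b ∈ upper,
        ((a.combine b).Holds u ↔ a.threshold u < b.threshold u) := by
      simp only [lower, upper, List.mem_filter, decide_eq_true_eq, and_imp]
      exact fun a _ ha b _ hb => holds_combine_iff ha hb
    exact ⟨fun h a ha b hb => (hcomb a ha b hb).1 (h a b ha hb),
      fun h a b ha hb => (hcomb a ha b hb).2 (h a ha b hb)⟩
  simp only [forall_holds_snoc_iff hl, exists_and_left, List.forall_mem_append,
    List.forall_mem_map, hpairs]
  refine and_congr_right fun _ => ⟨fun h => ?_, fun ⟨x, hlx, hxu⟩ s hs t ht => ?_⟩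
  · obtain ⟨x, hlx, hxu⟩ := Finset.exists_between' _ _ h
    simp only [List.mem_toFinset, List.forall_mem_map] at hlx hxu
    exact ⟨x, hlx, hxu⟩
  · simp only [List.mem_toFinset, List.mem_map] at hs ht
    obtain ⟨a, ha, rfl⟩ := hs
    obtain ⟨b, hb, rfl⟩ := ht
    exact (hlx a ha).trans (hxu b hb)

theorem exists_elim (l : List (LinearConstraint (Fin (m + 1)) K)) :
    ∃ l' : List (LinearConstraint (Fin m) K), ∀ u,
      (∀ a ∈ l', a.Holds u) ↔ ∃ x, ∀ a ∈ l, a.Holds (Fin.snoc u x) := by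
  by_cases h : ∀ a ∈ l, a.lastCoeff ≠ 0 → a.strict
  · exact exists_elim_of_strict h
  · push Not at h
    obtain ⟨a₀, ha₀l, ha₀, hs⟩ := h
    exact ⟨_, exists_elim_of_eq ha₀l (by simpa using hs) ha₀⟩

end LinearConstraint

section DNF

variable {A X : Type*} {atom : A → Set X} {S : Set X}

def IsDNF (atom : A → Set X) (S : Set X) : Prop :=
  ∃ d : List (List A), S = ⋃ c ∈ d, ⋂ a ∈ c, atom a

lemma isDNF_atom (a : A) : IsDNF atom (atom a) := ⟨[ [a] ], by simp⟩

lemma isDNF_empty : IsDNF atom ∅ := ⟨[], by simp⟩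

lemma isDNF_univ : IsDNF atom univ := ⟨[ [] ], by simp⟩

lemma supClosed_isDNF : SupClosed {S | IsDNF atom S} := by
  rintro _ ⟨d₁, rfl⟩ _ ⟨d₂, rfl⟩
  exact ⟨d₁ ++ d₂, by ext; simp [or_and_right, exists_or]⟩

lemma infClosed_isDNF : InfClosed {S | IsDNF atom S} := by
  rintro _ ⟨d₁, rfl⟩ _ ⟨d₂, rfl⟩
  refine ⟨(d₁ ×ˢ d₂).map fun p => p.1 ++ p.2, ?_⟩
  ext x
  simp only [inf_eq_inter, mem_inter_iff, mem_iUnion, mem_iInter, List.mem_map, Prod.exists,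
    List.mem_product, exists_prop]
  constructor
  · rintro ⟨⟨c₁, hc₁, h₁⟩, ⟨c₂, hc₂, h₂⟩⟩
    exact ⟨_, ⟨c₁, c₂, ⟨hc₁, hc₂⟩, rfl⟩, fun a ha => (List.mem_append.1 ha).elim (h₁ a) (h₂ a)⟩
  · rintro ⟨_, ⟨c₁, c₂, ⟨hc₁, hc₂⟩, rfl⟩, h⟩
    exact ⟨⟨c₁, hc₁, fun a ha => h a (List.mem_append_left _ ha)⟩,
      ⟨c₂, hc₂, fun a ha => h a (List.mem_append_right _ ha)⟩⟩

lemma IsDNF.union {T : Set X} (hS : IsDNF atom S) (hT : IsDNF atom T) : IsDNF atom (S ∪ T) :=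
  supClosed_isDNF hS hT

lemma IsDNF.inter {T : Set X} (hS : IsDNF atom S) (hT : IsDNF atom T) : IsDNF atom (S ∩ T) :=
  infClosed_isDNF hS hT

theorem IsDNF.mem_of_closed {𝒞 : Set (Set X)} (hsup : SupClosed 𝒞) (hinf : InfClosed 𝒞) (hempty : ∅ ∈ 𝒞)
    (huniv : univ ∈ 𝒞) (hatom : ∀ a, atom a ∈ 𝒞) (hS : IsDNF atom S) : S ∈ 𝒞 := by
  obtain ⟨d, rfl⟩ := hS
  exact hsup.biSup_mem d.finite_toSet hempty fun c _ =>
    hinf.biInf_mem c.finite_toSet huniv fun a _ => hatom a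

theorem IsDNF.compl (hcompl : ∀ a, IsDNF atom (atom a)ᶜ) (hS : IsDNF atom S) :
    IsDNF atom Sᶜ := by
  obtain ⟨d, rfl⟩ := hS
  simp only [compl_iUnion, compl_iInter]
  exact infClosed_isDNF.biInf_mem d.finite_toSet isDNF_univ fun c _ =>
    supClosed_isDNF.biSup_mem c.finite_toSet isDNF_empty fun a _ => hcompl a

theorem IsDNF.image {B Y : Type*} {atom' : B → Set Y} (f : X → Y)
    (hcell : ∀ c : List A, IsDNF atom' (f '' ⋂ a ∈ c, atom a)) (hS : IsDNF atom S) :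
    IsDNF atom' (f '' S) := by
  obtain ⟨d, rfl⟩ := hS
  rw [image_iUnion₂]
  exact supClosed_isDNF.biSup_mem d.finite_toSet isDNF_empty fun c _ => hcell c

end DNF

section Coordinates

variable {K : Type*} [Field K] [LinearOrder K] {m : ℕ}

def coordAtom : LinearConstraint (Fin m) K ⊕ LinearConstraint (Fin m) K → Set (Fin m → K × K) :=
  Sum.elim (fun a => {v | a.Holds (Prod.fst ∘ v)}) (fun a => {v | a.Holds (Prod.snd ∘ v)})

lemma isDNF_compl_coordAtom [IsStrictOrderedRing K]
    (a : LinearConstraint (Fin m) K ⊕ LinearConstraint (Fin m) K) :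
    IsDNF coordAtom (coordAtom a)ᶜ := by
  have hcompl (f : (Fin m → K × K) → Fin m → K) (a : LinearConstraint (Fin m) K) :
      {v | a.Holds (f v)}ᶜ = {v | a.flipStrict.Holds (f v)} ∪ {v | a.positive.Holds (f v)} := by
    ext v
    simp [LinearConstraint.not_holds_iff]
  rcases a with a | a
  · exact hcompl _ a ▸ (isDNF_atom (atom := coordAtom) (Sum.inl a.flipStrict)).union
      (isDNF_atom (atom := coordAtom) (Sum.inl a.positive))
  · exact hcompl _ a ▸ (isDNF_atom (atom := coordAtom) (Sum.inr a.flipStrict)).union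
      (isDNF_atom (atom := coordAtom) (Sum.inr a.positive))

lemma mem_iInter_coordAtom_iff (c : List (LinearConstraint (Fin m) K ⊕ LinearConstraint (Fin m) K))
    (w : Fin m → K × K) :
    w ∈ ⋂ a ∈ c, coordAtom a ↔ (∀ a ∈ c.filterMap Sum.getLeft?, a.Holds (Prod.fst ∘ w)) ∧
      ∀ a ∈ c.filterMap Sum.getRight?, a.Holds (Prod.snd ∘ w) := by
  simp only [mem_iInter, List.mem_filterMap, Sum.getLeft?_eq_some_iff, Sum.getRight?_eq_some_iff]
  constructor
  · intro h
    exact ⟨fun a ⟨_, hc, ha⟩ => by subst ha; exact h _ hc,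
      fun a ⟨_, hc, ha⟩ => by subst ha; exact h _ hc⟩
  · rintro ⟨h₁, h₂⟩ (a | a) ha
    exacts [h₁ a ⟨_, ha, rfl⟩, h₂ a ⟨_, ha, rfl⟩]

theorem isDNF_image_init_iInter_coordAtom [IsStrictOrderedRing K]
    (c : List (LinearConstraint (Fin (m + 1)) K ⊕ LinearConstraint (Fin (m + 1)) K)) :
    IsDNF coordAtom (Fin.init '' ⋂ a ∈ c, coordAtom a) := by
  obtain ⟨l₁, hl₁⟩ := LinearConstraint.exists_elim (c.filterMap Sum.getLeft?)
  obtain ⟨l₂, hl₂⟩ := LinearConstraint.exists_elim (c.filterMap Sum.getRight?)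
  refine ⟨[l₁.map .inl ++ l₂.map .inr], ?_⟩
  ext v
  simp only [Fin.mem_image_init_iff, mem_iInter_coordAtom_iff, Fin.comp_snoc, Prod.exists,
    exists_and_left, exists_and_right, List.mem_singleton, iUnion_iUnion_eq_left]
  rw [← hl₁, ← hl₂]
  simp [List.filterMap_append, List.filterMap_map, Function.comp_def]

end Coordinates

namespace FirstOrder.Language

variable (L : Language) {M α : Type*} [L.Structure M]

def QFDefinable (S : Set (α → M)) : Prop :=
  ∃ ψ : L.Formula α, ψ.IsQF ∧ S = {v | ψ.Realize v}

variable {L}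

lemma qfDefinable_empty : L.QFDefinable (∅ : Set (α → M)) :=
  ⟨⊥, BoundedFormula.isQF_bot, by ext; simp⟩

lemma qfDefinable_univ : L.QFDefinable (univ : Set (α → M)) :=
  ⟨⊤, BoundedFormula.IsQF.top, by ext; simp⟩

lemma supClosed_qfDefinable : SupClosed {S : Set (α → M) | L.QFDefinable S} := by
  rintro _ ⟨ψ₁, h₁, rfl⟩ _ ⟨ψ₂, h₂, rfl⟩
  exact ⟨ψ₁ ⊔ ψ₂, h₁.sup h₂, by ext; simp⟩

lemma infClosed_qfDefinable : InfClosed {S : Set (α → M) | L.QFDefinable S} := by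
  rintro _ ⟨ψ₁, h₁, rfl⟩ _ ⟨ψ₂, h₂, rfl⟩
  exact ⟨ψ₁ ⊓ ψ₂, h₁.inf h₂, by ext; simp⟩

lemma Term.realize_sumElim_eq_relabel_append {k n : ℕ} (t : L.Term (Fin k ⊕ Fin n))
    (v : Fin k → M) (xs : Fin n → M) :
    t.realize (Sum.elim v xs) = (t.relabel finSumFinEquiv).realize (Fin.append v xs) := by
  rw [Term.realize_relabel]
  congr 1
  ext (i | i) <;> simp

end FirstOrder.Language

namespace DpMin

variable {β : Type*}

@[simp] lemma funMap_reflect (u : Unit) (x : Fin 1 → ℚ × ℚ) :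
    Structure.funMap (L := LQQ) (n := 1) (Sum.inl u) x = (-(x 0).1, (x 0).2) := rfl

@[simp] lemma funMap_smul (q : ℚ) (x : Fin 1 → ℚ × ℚ) :
    Structure.funMap (L := LQQ) (n := 1) (Sum.inr q) x = q • x 0 := rfl

@[simp] lemma funMap_add (f : LQQ.Functions 2) (x : Fin 2 → ℚ × ℚ) :
    Structure.funMap f x = x 0 + x 1 := rfl

lemma relMap_iff (R : LQQ.Relations 2) (x : Fin 2 → ℚ × ℚ) :
    Structure.RelMap R x ↔ toLex (x 0) < toLex (x 1) :=
  Prod.Lex.lt_iff.symm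

def zeroTerm : LQQ.Term β := Constants.term (() : LQQ.Functions 0)

def addTerm (t u : LQQ.Term β) : LQQ.Term β := Functions.apply₂ (() : LQQ.Functions 2) t u

def smulTerm (q : ℚ) (t : LQQ.Term β) : LQQ.Term β := Functions.apply₁ (Sum.inr q) t

def reflectTerm (t : LQQ.Term β) : LQQ.Term β := Functions.apply₁ (Sum.inl ()) t

variable (w : β → ℚ × ℚ)

@[simp] lemma realize_zeroTerm : (zeroTerm : LQQ.Term β).realize w = 0 := rfl

@[simp] lemma realize_addTerm (t u : LQQ.Term β) :
    (addTerm t u).realize w = t.realize w + u.realize w := rfl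

@[simp] lemma realize_smulTerm (q : ℚ) (t : LQQ.Term β) :
    (smulTerm q t).realize w = q • t.realize w := rfl

@[simp] lemma realize_reflectTerm (t : LQQ.Term β) :
    (reflectTerm t).realize w = (-(t.realize w).1, (t.realize w).2) := rfl

def fstTerm (t : LQQ.Term β) : LQQ.Term β :=
  smulTerm (1 / 2) (addTerm t (smulTerm (-1) (reflectTerm t)))

def sndTerm (t : LQQ.Term β) : LQQ.Term β :=
  smulTerm (1 / 2) (addTerm t (reflectTerm t))

@[simp] lemma realize_fstTerm (t : LQQ.Term β) :
    (fstTerm t).realize w = ((t.realize w).1, 0) := by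
  ext <;> simp [fstTerm]; ring

@[simp] lemma realize_sndTerm (t : LQQ.Term β) :
    (sndTerm t).realize w = (0, (t.realize w).2) := by
  ext <;> simp [sndTerm]; ring

variable [Fintype β]

theorem exists_realize_eq_dotProduct (t : LQQ.Term β) :
    ∃ c d : β → ℚ, ∀ w : β → ℚ × ℚ,
      t.realize w = (c ⬝ᵥ (Prod.fst ∘ w), d ⬝ᵥ (Prod.snd ∘ w)) := by
  classical
  induction t with
  | var i => exact ⟨Pi.single i 1, Pi.single i 1, fun w => by simp⟩
  | @func l f ts ih =>
    choose c d h using ih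
    match l, f with
    | 0, _ => exact ⟨0, 0, fun w => by simp; rfl⟩
    | 1, Sum.inl _ => exact ⟨-c 0, d 0, fun w => by simp [Term.realize, h, neg_dotProduct]⟩
    | 1, Sum.inr q => exact ⟨q • c 0, q • d 0, fun w => by simp [Term.realize, h, smul_dotProduct]⟩
    | 2, _ => exact ⟨c 0 + c 1, d 0 + d 1, fun w => by simp [Term.realize, h, add_dotProduct]⟩
    | _ + 3, f => exact f.elim

theorem exists_term_realize_eq_dotProduct (c d : β → ℚ) :
    ∃ t : LQQ.Term β, ∀ w : β → ℚ × ℚ,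
      t.realize w = (c ⬝ᵥ (Prod.fst ∘ w), d ⬝ᵥ (Prod.snd ∘ w)) := by
  suffices ∀ s : Finset β, ∃ t : LQQ.Term β, ∀ w : β → ℚ × ℚ,
      t.realize w = ∑ i ∈ s, (c i * (w i).1, d i * (w i).2) by
    obtain ⟨t, ht⟩ := this Finset.univ
    exact ⟨t, fun w => by ext <;> simp [ht, dotProduct, Prod.fst_sum, Prod.snd_sum]⟩
  intro s
  induction s using Finset.cons_induction with
  | empty => exact ⟨zeroTerm, fun w => by simp⟩
  | cons i s _ ih =>
    obtain ⟨t, ht⟩ := ih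
    refine ⟨addTerm (addTerm (smulTerm (c i) (fstTerm (var i)))
      (smulTerm (d i) (sndTerm (var i)))) t, fun w => ?_⟩
    rw [Finset.sum_cons, realize_addTerm, ht]
    congr 1
    ext <;> simp

variable {m : ℕ}

lemma qfDefinable_setOf_realize_eq (t₁ t₂ : LQQ.Term (Fin m)) :
    LQQ.QFDefinable {v : Fin m → ℚ × ℚ | t₁.realize v = t₂.realize v} :=
  ⟨t₁.equal t₂, (BoundedFormula.IsAtomic.equal _ _).isQF, by ext; simp⟩

lemma qfDefinable_setOf_realize_lt (t₁ t₂ : LQQ.Term (Fin m)) :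
    LQQ.QFDefinable {v : Fin m → ℚ × ℚ | toLex (t₁.realize v) < toLex (t₂.realize v)} :=
  ⟨Relations.formula₂ () t₁ t₂, (BoundedFormula.IsAtomic.rel _ _).isQF, by
    ext; exact (Formula.realize_rel₂.trans (relMap_iff _ _)).symm⟩

theorem qfDefinable_coordAtom (a : LinearConstraint (Fin m) ℚ ⊕ LinearConstraint (Fin m) ℚ) :
    LQQ.QFDefinable (coordAtom a) := by
  obtain ⟨t, ht⟩ := exists_term_realize_eq_dotProduct (a.elim LinearConstraint.coeff 0)
    (a.elim 0 LinearConstraint.coeff)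
  rcases a with ⟨c, _ | _⟩ | ⟨c, _ | _⟩
  · convert qfDefinable_setOf_realize_eq t zeroTerm using 1
    ext; simp [coordAtom, LinearConstraint.Holds, ht, Prod.ext_iff]
  · convert qfDefinable_setOf_realize_lt t zeroTerm using 1
    ext; simp [coordAtom, LinearConstraint.Holds, ht, Prod.Lex.lt_iff]
  · convert qfDefinable_setOf_realize_eq t zeroTerm using 1
    ext; simp [coordAtom, LinearConstraint.Holds, ht, Prod.ext_iff]
  · convert qfDefinable_setOf_realize_lt t zeroTerm using 1
    ext; simp [coordAtom, LinearConstraint.Holds, ht, Prod.Lex.lt_iff]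

theorem isDNF_setOf_realize_eq (t₁ t₂ : LQQ.Term (Fin m)) :
    IsDNF coordAtom {w : Fin m → ℚ × ℚ | t₁.realize w = t₂.realize w} := by
  obtain ⟨c₁, d₁, h₁⟩ := exists_realize_eq_dotProduct t₁
  obtain ⟨c₂, d₂, h₂⟩ := exists_realize_eq_dotProduct t₂
  convert (isDNF_atom (atom := coordAtom) (.inl ⟨c₁ - c₂, false⟩)).inter
    (isDNF_atom (atom := coordAtom) (.inr ⟨d₁ - d₂, false⟩)) using 1
  ext w
  simp [coordAtom, LinearConstraint.Holds, h₁, h₂, sub_dotProduct, sub_eq_zero]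

theorem isDNF_setOf_realize_lt (t₁ t₂ : LQQ.Term (Fin m)) :
    IsDNF coordAtom {w : Fin m → ℚ × ℚ | toLex (t₁.realize w) < toLex (t₂.realize w)} := by
  obtain ⟨c₁, d₁, h₁⟩ := exists_realize_eq_dotProduct t₁
  obtain ⟨c₂, d₂, h₂⟩ := exists_realize_eq_dotProduct t₂
  convert (isDNF_atom (atom := coordAtom) (.inl ⟨c₁ - c₂, true⟩)).union
    ((isDNF_atom (atom := coordAtom) (.inl ⟨c₁ - c₂, false⟩)).inter
      (isDNF_atom (atom := coordAtom) (.inr ⟨d₁ - d₂, true⟩))) using 1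
  ext w
  simp [coordAtom, LinearConstraint.Holds, h₁, h₂, sub_dotProduct, sub_eq_zero, Prod.Lex.lt_iff]

theorem exists_isDNF_realize {k n : ℕ} (φ : LQQ.BoundedFormula (Fin k) n) :
    ∃ S : Set (Fin (k + n) → ℚ × ℚ), IsDNF coordAtom S ∧
      ∀ v xs, φ.Realize v xs ↔ Fin.append v xs ∈ S := by
  induction φ with
  | falsum => exact ⟨∅, isDNF_empty, fun _ _ => Iff.rfl⟩
  | equal t₁ t₂ =>
    refine ⟨_, isDNF_setOf_realize_eq (t₁.relabel finSumFinEquiv) (t₂.relabel finSumFinEquiv),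
      fun v xs => ?_⟩
    simp [BoundedFormula.Realize, Term.realize_sumElim_eq_relabel_append]
  | @rel n l R ts =>
    match l, R with
    | 2, R =>
      refine ⟨_, isDNF_setOf_realize_lt ((ts 0).relabel finSumFinEquiv)
        ((ts 1).relabel finSumFinEquiv), fun v xs => ?_⟩
      simp [BoundedFormula.Realize, relMap_iff, Term.realize_sumElim_eq_relabel_append]
    | 0, R | 1, R | _ + 3, R => exact R.elim
  | imp φ ψ ihφ ihψ =>
    obtain ⟨S, hS, hφ⟩ := ihφ
    obtain ⟨T, hT, hψ⟩ := ihψ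
    exact ⟨Sᶜ ∪ T, (hS.compl isDNF_compl_coordAtom).union hT,
      fun v xs => by simp [hφ, hψ, imp_iff_not_or]⟩
  | all φ ih =>
    obtain ⟨S, hS, hφ⟩ := ih
    refine ⟨(Fin.init '' Sᶜ)ᶜ, ((hS.compl isDNF_compl_coordAtom).image Fin.init
      isDNF_image_init_iInter_coordAtom).compl isDNF_compl_coordAtom, fun v xs => ?_⟩
    rw [BoundedFormula.realize_all, mem_compl_iff, Fin.mem_image_init_iff]
    simp [hφ, Fin.append_snoc]

/-- The theory of `𝔐 = ⟨ℚ × ℚ, <_lex, +, (0,0), f, λ_q⟩_{q ∈ ℚ}` admits quantifier elimination: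
every formula is equivalent in `𝔐` to a quantifier-free formula. -/
theorem LQQ_qe (k : ℕ) (φ : LQQ.Formula (Fin k)) :
    ∃ ψ : LQQ.Formula (Fin k), ψ.IsQF ∧
      ∀ v : Fin k → ℚ × ℚ, φ.Realize v ↔ ψ.Realize v := by
  obtain ⟨S, hS, hφ⟩ := exists_isDNF_realize φ
  obtain ⟨ψ, hψ, rfl⟩ := hS.mem_of_closed supClosed_qfDefinable infClosed_qfDefinable qfDefinable_empty
    qfDefinable_univ qfDefinable_coordAtom
  refine ⟨ψ, hψ, fun v => ?_⟩
  refine (hφ v _).trans ?_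
  rw [Fin.append_right_nil _ _ rfl]
  rfl

end DpMin
end

section
/- Let G be a divisible linearly ordered abelian group (so G carries a scalar multiplication by ℚ) and let P ⊆ G satisfy: 0 ∈ P; for all x, x ∈ P iff −x ∈ P; P and G∖P are open in the order topology; if x ≤ y, the closed interval [x,y] is contained in P, and q,r ∈ ℚ are strictly positive, then qx + ry lies in the same convex component of P as x and y; and the analogous statement with G∖P in place of P. For a ∈ G, let C(a) be the convex component of P containing a if a ∈ P, and of G∖P if a ∉ P; let [a] = C(a) ∪ (−C(a)); let |a| = max(a,−a); and let [a]_≤ = ⋃{[b] : b ∈ G, |b| ≤ |a|}. Then: (1) if b ∉ [a] and |a| < |b|, then a + b ∈ [b]; (2) if b ∈ [a], then a + b ∈ [a]_≤; (3) [a]_≤ is closed under ℚ-linear combinations: every finite sum q₁x₁ + … + qₙxₙ with qᵢ ∈ ℚ and xᵢ ∈ [a]_≤ lies in [a]_≤. -/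
/- The two convexity axioms make each component `C(x)` absorb the positive ℚ-combinations
`q x + r y` with `y ∈ C(x)`, and the symmetry of `P` gives `C(-x) = -C(x)`.
For (1) with `b > 0`: `C(b)` contains `b/2` and `2b`; if `a + b ≥ b/2` it lies between them, and
otherwise `-a` lies between `b/2` and `b`, which puts `b` in `[a]`. For (2) and (3), the only sum
`x + y` not handled by (1) or by `x + C(x) ⊆ C(x)` is `x - (-y)` with `x, -y` in one component
`C`: if `0 ∈ C` then `C = -C` absorbs the difference; otherwise `C` lies on one side of `0`, and a
difference at least as large as some element of `C` is squeezed between that element and a point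
of `C`. So `[a]_≤` is closed under addition and, as `[q x] = [x]`, under ℚ-scaling. -/

namespace DpMin

variable {G : Type*}

/-- The convex component of a point `a` in a set `S`: the union of all convex (order-connected)
subsets of `S` containing `a`. -/
def convComp [LinearOrder G] (S : Set G) (a : G) : Set G :=
  ⋃₀ {C : Set G | C ⊆ S ∧ a ∈ C ∧ C.OrdConnected}

open scoped Classical in
/-- `comp P a` is the convex component of `P` containing `a` if `a ∈ P`, and the convex
component of `G ∖ P` containing `a` otherwise. -/
noncomputable def comp [LinearOrder G] (P : Set G) (a : G) : Set G :=
  if a ∈ P then convComp P a else convComp Pᶜ a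

/-- The class `[a] = C(a) ∪ (−C(a))`. -/
def cls [AddCommGroup G] [LinearOrder G] [IsOrderedAddMonoid G] (P : Set G) (a : G) : Set G :=
  comp P a ∪ (Neg.neg '' comp P a)

/-- `[a]_≤ = ⋃ {[b] : |b| ≤ |a|}`. -/
def clsLE [AddCommGroup G] [LinearOrder G] [IsOrderedAddMonoid G] (P : Set G) (a : G) : Set G :=
  ⋃ (b : G) (_ : |b| ≤ |a|), cls P b

open Set

section OrdConnectedComponent

variable [LinearOrder G]

lemma convComp_eq_ordConnectedComponent (S : Set G) (a : G) :
    convComp S a = S.ordConnectedComponent a := by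
  ext y
  constructor
  · rintro ⟨C, ⟨hCS, haC, hC⟩, hyC⟩
    exact (hC.uIcc_subset haC hyC).trans hCS
  · intro hy
    have haS : a ∈ S := hy left_mem_uIcc
    exact ⟨_, ⟨ordConnectedComponent_subset, self_mem_ordConnectedComponent.2 haS,
      inferInstance⟩, hy⟩

variable [AddCommGroup G] [IsOrderedAddMonoid G] {S : Set G} {a x : G}

lemma neg_mem_ordConnectedComponent_neg (hS : ∀ x, x ∈ S ↔ -x ∈ S)
    (h : x ∈ S.ordConnectedComponent a) : -x ∈ S.ordConnectedComponent (-a) := by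
  rw [mem_ordConnectedComponent, ← image_neg_uIcc]
  rintro _ ⟨w, hw, rfl⟩
  exact (hS w).1 (h hw)

end OrdConnectedComponent

def PosCombStable [LinearOrder G] [Add G] [SMul ℚ G] (S : Set G) : Prop :=
  ∀ x y : G, x ≤ y → Set.Icc x y ⊆ S → ∀ q r : ℚ, 0 < q → 0 < r →
    q • x + r • y ∈ convComp S x ∧ q • x + r • y ∈ convComp S y

lemma PosCombStable.smul_add_smul_mem [LinearOrder G] [AddCommMagma G] [SMul ℚ G] {S : Set G}
    (hS : PosCombStable S) {x y : G} (hy : y ∈ S.ordConnectedComponent x) {q r : ℚ}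
    (hq : 0 < q) (hr : 0 < r) : q • x + r • y ∈ S.ordConnectedComponent x := by
  rw [← convComp_eq_ordConnectedComponent]
  rcases le_total x y with hxy | hyx
  · exact (hS x y hxy (uIcc_of_le hxy ▸ hy) q r hq hr).1
  · rw [add_comm]
    exact (hS y x hyx (uIcc_of_ge hyx ▸ hy) r q hr hq).2

section Comp

open scoped Classical

variable [LinearOrder G] {P : Set G} {a b x y : G}

lemma comp_eq_ordConnectedComponent (P : Set G) (a : G) :
    comp P a = (if a ∈ P then P else Pᶜ).ordConnectedComponent a := by
  unfold comp
  split_ifs <;> exact convComp_eq_ordConnectedComponent _ a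

lemma mem_comp_self : a ∈ comp P a := by
  rw [comp_eq_ordConnectedComponent, self_mem_ordConnectedComponent]
  split_ifs with h
  exacts [h, h]

instance : (comp P a).OrdConnected := by
  rw [comp_eq_ordConnectedComponent]
  infer_instance

lemma mem_iff_of_mem_comp (h : b ∈ comp P a) : b ∈ P ↔ a ∈ P := by
  rw [comp_eq_ordConnectedComponent] at h
  have := ordConnectedComponent_subset h
  split_ifs at this with ha
  exacts [iff_of_true this ha, iff_of_false this ha]

lemma comp_eq_of_mem (h : b ∈ comp P a) : comp P b = comp P a := by
  have hba := mem_iff_of_mem_comp h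
  rw [comp_eq_ordConnectedComponent] at h ⊢
  rw [comp_eq_ordConnectedComponent]
  simp only [hba]
  exact (ordConnectedComponent_eq h).symm

def CompPosCombStable [Add G] [SMul ℚ G] (P : Set G) : Prop :=
  ∀ ⦃x y : G⦄, y ∈ comp P x → ∀ ⦃q r : ℚ⦄, 0 < q → 0 < r → q • x + r • y ∈ comp P x

lemma PosCombStable.compPosCombStable [AddCommMagma G] [SMul ℚ G] (h : PosCombStable P)
    (h' : PosCombStable Pᶜ) : CompPosCombStable P := by
  intro x y hy q r hq hr
  rw [comp_eq_ordConnectedComponent] at hy ⊢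
  split_ifs at hy ⊢
  exacts [h.smul_add_smul_mem hy hq hr, h'.smul_add_smul_mem hy hq hr]

lemma neg_mem_comp_neg [AddCommGroup G] [IsOrderedAddMonoid G]
    (hsym : ∀ x : G, x ∈ P ↔ -x ∈ P) (h : x ∈ comp P a) : -x ∈ comp P (-a) := by
  rw [comp_eq_ordConnectedComponent] at h ⊢
  simp only [← hsym a]
  split_ifs at h ⊢
  · exact neg_mem_ordConnectedComponent_neg hsym h
  · exact neg_mem_ordConnectedComponent_neg (fun x => not_congr (hsym x)) h

lemma mem_comp_neg [AddCommGroup G] [IsOrderedAddMonoid G] (hsym : ∀ x : G, x ∈ P ↔ -x ∈ P) :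
    x ∈ comp P (-a) ↔ -x ∈ comp P a :=
  ⟨fun h => by simpa using neg_mem_comp_neg hsym h, fun h => by simpa using neg_mem_comp_neg hsym h⟩

variable [AddCommMonoid G] [Module ℚ G]

lemma smul_mem_comp (hP : CompPosCombStable P) {q : ℚ} (hq : 0 < q) (x : G) : q • x ∈ comp P x := by
  simpa [← add_smul] using hP mem_comp_self (half_pos hq) (half_pos hq)

lemma add_mem_comp (hP : CompPosCombStable P) (hy : y ∈ comp P x) : x + y ∈ comp P x := by
  simpa using hP hy one_pos one_pos

end Comp

lemma _root_.Set.OrdConnected.sub_mem_or_sub_mem [AddCommGroup G] [LinearOrder G] [IsOrderedAddMonoid G]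
    {C : Set G} (hC : C.OrdConnected) (h0 : (0 : G) ∉ C) {u v e : G} (hu : u ∈ C) (hv : v ∈ C)
    (he : e ∈ C) (hle : |e| ≤ |u - v|) : u - v ∈ C ∨ v - u ∈ C := by
  wlog hvu : v ≤ u generalizing u v
  · exact (this hv hu (abs_sub_comm u v ▸ hle) (le_of_not_ge hvu)).symm
  rw [abs_of_nonneg (sub_nonneg.2 hvu)] at hle
  rcases lt_or_gt_of_ne (ne_of_mem_of_not_mem he h0) with he0 | he0
  · have hu0 : u < 0 := lt_of_not_ge fun hu0 => h0 (hC.out he hu ⟨he0.le, hu0⟩)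
    refine Or.inr (hC.out hv he ⟨(le_sub_self_iff v).2 hu0.le, ?_⟩)
    rw [← neg_sub]
    exact neg_le.2 (abs_of_neg he0 ▸ hle)
  · have hv0 : 0 < v := lt_of_not_ge fun hv0 => h0 (hC.out hv he ⟨hv0, he0.le⟩)
    exact Or.inl (hC.out he hu ⟨(le_abs_self e).trans hle, sub_le_self u hv0.le⟩)

section Cls

variable [AddCommGroup G] [LinearOrder G] [IsOrderedAddMonoid G] {P : Set G} {a b e u v w x y z : G}

lemma mem_cls_iff : z ∈ cls P a ↔ z ∈ comp P a ∨ -z ∈ comp P a := by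
  rw [cls, mem_union, image_neg_eq_neg, mem_neg]

lemma mem_cls_self : a ∈ cls P a :=
  mem_cls_iff.2 (Or.inl mem_comp_self)

lemma neg_mem_cls (h : z ∈ cls P a) : -z ∈ cls P a := by
  rw [mem_cls_iff] at h ⊢
  rw [neg_neg]
  exact h.symm

lemma cls_neg (hsym : ∀ x : G, x ∈ P ↔ -x ∈ P) : cls P (-a) = cls P a := by
  ext z
  simp only [mem_cls_iff, mem_comp_neg hsym, neg_neg, or_comm]

lemma cls_eq_of_mem (hsym : ∀ x : G, x ∈ P ↔ -x ∈ P) (h : b ∈ cls P a) : cls P b = cls P a := by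
  rcases mem_cls_iff.1 h with h | h
  · rw [cls, cls, comp_eq_of_mem h]
  · rw [← cls_neg hsym, cls, cls, comp_eq_of_mem h]

variable [Module ℚ G]

lemma smul_mem_cls (hP : CompPosCombStable P) {q : ℚ} (hq : q ≠ 0) (x : G) : q • x ∈ cls P x := by
  rcases hq.lt_or_gt with hq | hq
  · exact mem_cls_iff.2 (Or.inr (by simpa using smul_mem_comp hP (neg_pos.2 hq) x))
  · exact mem_cls_iff.2 (Or.inl (smul_mem_comp hP hq x))

lemma add_mem_comp_of_abs_lt' (hsym : ∀ x : G, x ∈ P ↔ -x ∈ P) (hP : CompPosCombStable P)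
    (hnb : b ∉ cls P a) (hab : |a| < b) : a + b ∈ comp P b := by
  set m : G := (2 : ℚ)⁻¹ • b
  have hmm : m + m = b := by rw [← add_smul]; norm_num
  have hm : m ∈ comp P b := smul_mem_comp hP (by norm_num) b
  rcases le_or_gt m (a + b) with hma | ham
  · have hbb : b + b ∈ comp P b := add_mem_comp hP mem_comp_self
    exact Set.Icc_subset _ hm hbb ⟨hma, add_le_add_left ((le_abs_self a).trans hab.le) b⟩
  · have hma : m < -a := by
      rw [← hmm, ← add_assoc] at ham
      exact lt_neg_iff_add_neg'.2 (neg_of_add_lt_left ham)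
    have hna : -a ∈ comp P b :=
      Set.Icc_subset _ hm mem_comp_self ⟨hma.le, (neg_le_abs a).trans hab.le⟩
    refine absurd ?_ hnb
    rw [← cls_neg hsym, cls_eq_of_mem hsym (mem_cls_iff.2 (Or.inl hna))]
    exact mem_cls_self

lemma add_mem_comp_of_abs_lt (hsym : ∀ x : G, x ∈ P ↔ -x ∈ P) (hP : CompPosCombStable P)
    (hnb : b ∉ cls P a) (hab : |a| < |b|) : a + b ∈ comp P b := by
  rcases le_or_gt 0 b with hb | hb
  · exact add_mem_comp_of_abs_lt' hsym hP hnb (abs_of_nonneg hb ▸ hab)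
  · have hnb' : -b ∉ cls P (-a) := by
      rw [cls_neg hsym]
      exact fun h => hnb (by simpa using neg_mem_cls h)
    have h := add_mem_comp_of_abs_lt' hsym hP hnb' (by rwa [abs_neg, ← abs_of_neg hb])
    simpa [add_comm] using (mem_comp_neg hsym).1 h

lemma sub_mem_cls (hsym : ∀ x : G, x ∈ P ↔ -x ∈ P) (hP : CompPosCombStable P)
    (hu : u ∈ comp P w) (hv : v ∈ comp P w) (he : e ∈ comp P w) (hle : |e| ≤ |u - v|) :
    u - v ∈ cls P w := by
  by_cases h0 : (0 : G) ∈ comp P w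
  · -- `C(w) = C(0)` is symmetric
    have hv' : -v ∈ comp P u := by
      rw [comp_eq_of_mem hu, ← comp_eq_of_mem h0, ← neg_zero, mem_comp_neg hsym, neg_neg]
      rwa [← comp_eq_of_mem h0] at hv
    rw [sub_eq_add_neg]
    exact mem_cls_iff.2 (Or.inl (comp_eq_of_mem hu ▸ add_mem_comp hP hv'))
  · rw [mem_cls_iff, neg_sub]
    exact Set.OrdConnected.sub_mem_or_sub_mem inferInstance h0 hu hv he hle

lemma add_mem_cls_or_abs_lt (hsym : ∀ x : G, x ∈ P ↔ -x ∈ P) (hP : CompPosCombStable P)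
    (hy : y ∈ cls P x) (he : e ∈ cls P x) : x + y ∈ cls P x ∨ |x + y| < |e| := by
  rcases mem_cls_iff.1 hy with hy | hy
  · exact Or.inl (mem_cls_iff.2 (Or.inl (add_mem_comp hP hy)))
  obtain ⟨e', he', hee'⟩ : ∃ e' ∈ comp P x, |e'| = |e| := by
    rcases mem_cls_iff.1 he with he | he
    exacts [⟨e, he, rfl⟩, ⟨-e, he, abs_neg e⟩]
  rw [← hee', ← sub_neg_eq_add]
  exact (le_or_gt |e'| |x - -y|).imp (sub_mem_cls hsym hP mem_comp_self hy he') id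

lemma add_mem_cls_of_not_mem_cls (hsym : ∀ x : G, x ∈ P ↔ -x ∈ P) (hP : CompPosCombStable P)
    (hyx : y ∉ cls P x) : x + y ∈ cls P x ∨ x + y ∈ cls P y ∨ x + y = 0 := by
  rcases lt_trichotomy |x| |y| with h | h | h
  · exact Or.inr (Or.inl (mem_cls_iff.2 (Or.inl (add_mem_comp_of_abs_lt hsym hP hyx h))))
  · rcases abs_eq_abs.1 h with rfl | rfl
    · exact absurd mem_cls_self hyx
    · exact Or.inr (Or.inr (neg_add_cancel y))
  · have hxy : x ∉ cls P y := fun hxy => hyx (cls_eq_of_mem hsym hxy ▸ mem_cls_self)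
    rw [add_comm]
    exact Or.inl (mem_cls_iff.2 (Or.inl (add_mem_comp_of_abs_lt hsym hP hxy h)))

end Cls

section ClsLE

variable [AddCommGroup G] [LinearOrder G] [IsOrderedAddMonoid G] {P : Set G} {a b x y z : G}

lemma mem_clsLE_iff : z ∈ clsLE P a ↔ ∃ b, |b| ≤ |a| ∧ z ∈ cls P b := by
  simp [clsLE]

lemma mem_clsLE_of_abs_le (h : |z| ≤ |a|) : z ∈ clsLE P a :=
  mem_clsLE_iff.2 ⟨z, h, mem_cls_self⟩

lemma cls_subset_clsLE (h : |b| ≤ |a|) : cls P b ⊆ clsLE P a :=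
  fun _ hz => mem_clsLE_iff.2 ⟨b, h, hz⟩

lemma mem_clsLE_of_mem_cls (hsym : ∀ x : G, x ∈ P ↔ -x ∈ P) (hx : x ∈ clsLE P a)
    (hz : z ∈ cls P x) : z ∈ clsLE P a := by
  obtain ⟨b, hb, hx⟩ := mem_clsLE_iff.1 hx
  exact cls_subset_clsLE hb (cls_eq_of_mem hsym hx ▸ hz)

variable [Module ℚ G]

lemma add_mem_clsLE (hsym : ∀ x : G, x ∈ P ↔ -x ∈ P) (hP : CompPosCombStable P)
    (hx : x ∈ clsLE P a) (hy : y ∈ clsLE P a) : x + y ∈ clsLE P a := by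
  by_cases hyx : y ∈ cls P x
  · obtain ⟨b, hb, hbx⟩ := mem_clsLE_iff.1 hx
    have hb' : b ∈ cls P x := by
      rw [cls_eq_of_mem hsym hbx]
      exact mem_cls_self
    rcases add_mem_cls_or_abs_lt hsym hP hyx hb' with h | h
    · exact mem_clsLE_of_mem_cls hsym hx h
    · exact mem_clsLE_of_abs_le (h.le.trans hb)
  · rcases add_mem_cls_of_not_mem_cls hsym hP hyx with h | h | h
    · exact mem_clsLE_of_mem_cls hsym hx h
    · exact mem_clsLE_of_mem_cls hsym hy h
    · exact mem_clsLE_of_abs_le (h ▸ abs_zero.trans_le (abs_nonneg a))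

def clsLESubmodule (hsym : ∀ x : G, x ∈ P ↔ -x ∈ P) (hP : CompPosCombStable P) (a : G) :
    Submodule ℚ G where
  carrier := clsLE P a
  add_mem' := add_mem_clsLE hsym hP
  zero_mem' := mem_clsLE_of_abs_le (abs_zero.trans_le (abs_nonneg a))
  smul_mem' q z hz := by
    rcases eq_or_ne q 0 with rfl | hq
    · exact zero_smul ℚ z ▸ mem_clsLE_of_abs_le (abs_zero.trans_le (abs_nonneg a))
    · exact mem_clsLE_of_mem_cls hsym hz (smul_mem_cls hP hq z)

end ClsLE

theorem cls_lemma_general [AddCommGroup G] [LinearOrder G] [IsOrderedAddMonoid G] [Module ℚ G]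
    (P : Set G)
    (hsym : ∀ x : G, x ∈ P ↔ -x ∈ P)
    (h5 : ∀ x y : G, x ≤ y → Set.Icc x y ⊆ P → ∀ q r : ℚ, 0 < q → 0 < r →
      q • x + r • y ∈ convComp P x ∧ q • x + r • y ∈ convComp P y)
    (h5' : ∀ x y : G, x ≤ y → Set.Icc x y ⊆ Pᶜ → ∀ q r : ℚ, 0 < q → 0 < r →
      q • x + r • y ∈ convComp Pᶜ x ∧ q • x + r • y ∈ convComp Pᶜ y) :
    (∀ a b : G, b ∉ cls P a → |a| < |b| → a + b ∈ cls P b) ∧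
    (∀ a b : G, b ∈ cls P a → a + b ∈ clsLE P a) ∧
    (∀ (a : G) (n : ℕ) (q : Fin n → ℚ) (x : Fin n → G),
      (∀ i, x i ∈ clsLE P a) → (∑ i, q i • x i) ∈ clsLE P a) := by
  have hP : CompPosCombStable P := PosCombStable.compPosCombStable h5 h5'
  refine ⟨fun a b hnb hab => Or.inl (add_mem_comp_of_abs_lt hsym hP hnb hab), ?_, ?_⟩
  · exact fun a b hb => add_mem_clsLE hsym hP (mem_clsLE_of_abs_le le_rfl)
      (cls_subset_clsLE le_rfl hb)
  · exact fun a n q x hx => (clsLESubmodule hsym hP a).sum_mem fun i _ =>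
      Submodule.smul_mem _ (q i) (hx i)

/-- Lemma on the classes `[a]` in a divisible ordered abelian group with a predicate `P`
satisfying the axioms (2)–(5'): (1) if `b ∉ [a]` and `|a| < |b|` then `a + b ∈ [b]`;
(2) if `b ∈ [a]` then `a + b ∈ [a]_≤`; (3) `[a]_≤` is closed under ℚ-linear combinations. -/
theorem cls_lemma [AddCommGroup G] [LinearOrder G] [IsOrderedAddMonoid G] [Module ℚ G]
    [TopologicalSpace G] [OrderTopology G]
    (P : Set G)
    (h0 : (0 : G) ∈ P)
    (hsym : ∀ x : G, x ∈ P ↔ -x ∈ P)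
    (hopenP : IsOpen P) (hopenPc : IsOpen Pᶜ)
    (h5 : ∀ x y : G, x ≤ y → Set.Icc x y ⊆ P → ∀ q r : ℚ, 0 < q → 0 < r →
      q • x + r • y ∈ convComp P x ∧ q • x + r • y ∈ convComp P y)
    (h5' : ∀ x y : G, x ≤ y → Set.Icc x y ⊆ Pᶜ → ∀ q r : ℚ, 0 < q → 0 < r →
      q • x + r • y ∈ convComp Pᶜ x ∧ q • x + r • y ∈ convComp Pᶜ y) :
    (∀ a b : G, b ∉ cls P a → |a| < |b| → a + b ∈ cls P b) ∧
    (∀ a b : G, b ∈ cls P a → a + b ∈ clsLE P a) ∧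
    (∀ (a : G) (n : ℕ) (q : Fin n → ℚ) (x : Fin n → G),
      (∀ i, x i ∈ clsLE P a) → (∑ i, q i • x i) ∈ clsLE P a) :=
  cls_lemma_general P hsym h5 h5'

end DpMin
end

section
/- Cells in ℚ_p are cell-like: for every integer n ≥ 1 there exists an integer k ≥ 1 such that for all λ, c, c', x, x' ∈ ℚ_p with x ≠ c and x' ≠ c', for all γ ∈ ℤ ∪ {+∞} and δ ∈ ℤ ∪ {−∞}, if (i) γ ≥ v(x − c) ≥ δ, (ii) x − c ∈ λ·Pₙ, and (iii) x − c = x' − c' or v((x − c) − (x' − c')) ≥ v(x − c) + k, then γ ≥ v(x' − c') ≥ δ and x' − c' ∈ λ·Pₙ. Here v : ℚ_p^× → ℤ is the p-adic valuation and Pₙ = {wⁿ : w ∈ ℚ_p} is the set of n-th powers in ℚ_p. -/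
/-!
Write `u = x - c` and `u' = x' - c'`. If `v(u - u') ≥ v(u) + k` then `‖u - u'‖ ≤ p^(-k) ‖u‖`, so
by the ultrametric inequality `u'` has the same norm, hence the same valuation, as `u`; and
`t = u'/u` satisfies `‖t - 1‖ ≤ p^(-k)`. Taking `k = 2 v_p(n) + 1` makes `‖t - 1‖ < ‖n‖²`, so
Hensel's lemma for `Xⁿ - t` at `1` makes `t` an `n`-th power, and `u' = u t` lies in the same
coset `λ·Pₙ` as `u`.
-/

open Polynomial

theorem PadicInt.exists_pow_eq_of_norm_sub_one_lt {p : ℕ} [Fact p.Prime] {n : ℕ} {t : ℤ_[p]}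
    (h : ‖t - 1‖ < ‖(n : ℤ_[p])‖ ^ 2) : ∃ s : ℤ_[p], s ^ n = t := by
  have hF : ‖(X ^ n - C t).aeval (1 : ℤ_[p])‖ <
      ‖(X ^ n - C t).derivative.aeval (1 : ℤ_[p])‖ ^ 2 := by
    simpa [derivative_X_pow, norm_sub_rev] using h
  obtain ⟨s, hs, -⟩ := hensels_lemma hF
  exact ⟨s, by simpa [sub_eq_zero] using hs⟩

namespace Padic

variable {p : ℕ} [Fact p.Prime]

theorem exists_pow_eq_of_norm_sub_one_lt {n : ℕ} {t : ℚ_[p]} (h : ‖t - 1‖ < ‖(n : ℚ_[p])‖ ^ 2) :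
    ∃ s : ℚ_[p], s ^ n = t := by
  have ht : ‖t‖ ≤ 1 := by
    have h1 : ‖t - 1‖ < ‖(1 : ℚ_[p])‖ := by
      rw [norm_one]
      exact h.trans_le (pow_le_one₀ (norm_nonneg _) (IsUltrametricDist.norm_natCast_le_one _ n))
    exact ((norm_eq_of_norm_sub_lt_right h1).trans norm_one).le
  obtain ⟨t, rfl⟩ : ∃ t' : ℤ_[p], (t' : ℚ_[p]) = t := ⟨⟨t, ht⟩, rfl⟩
  obtain ⟨s, hs⟩ := PadicInt.exists_pow_eq_of_norm_sub_one_lt (t := t)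
    (by simpa [PadicInt.norm_def] using h)
  exact ⟨s, by simp [← hs]⟩

theorem valuation_eq_of_norm_eq {x y : ℚ_[p]} (hx : x ≠ 0) (hy : y ≠ 0) (h : ‖x‖ = ‖y‖) :
    x.valuation = y.valuation := by
  have hp : (1 : ℝ) < p := mod_cast (Fact.out : p.Prime).one_lt
  rw [norm_eq_zpow_neg_valuation hx, norm_eq_zpow_neg_valuation hy] at h
  exact neg_injective ((zpow_right_strictMono₀ hp).injective h)

theorem norm_sub_le_of_valuation_add_le {u u' : ℚ_[p]} {k : ℤ} (hu : u ≠ 0)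
    (h : u.valuation + k ≤ (u - u').valuation) : ‖u - u'‖ ≤ (p : ℝ) ^ (-k) * ‖u‖ := by
  have hp : (1 : ℝ) < p := mod_cast (Fact.out : p.Prime).one_lt
  by_cases hd : u - u' = 0
  · rw [hd, norm_zero]
    positivity
  rw [norm_eq_zpow_neg_valuation hd, norm_eq_zpow_neg_valuation hu, ← zpow_add₀ (by positivity)]
  exact zpow_le_zpow_right₀ hp.le (by omega)

theorem zpow_neg_lt_norm_natCast_sq {n : ℕ} (hn : n ≠ 0) :
    (p : ℝ) ^ (-(2 * padicValNat p n + 1 : ℤ)) < ‖(n : ℚ_[p])‖ ^ 2 := by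
  have hp : (1 : ℝ) < p := mod_cast (Fact.out : p.Prime).one_lt
  rw [norm_eq_zpow_neg_valuation (Nat.cast_ne_zero.mpr hn), valuation_natCast, ← zpow_natCast,
    ← zpow_mul]
  exact zpow_lt_zpow_right₀ hp (by omega)

theorem valuation_eq_and_exists_eq_mul_pow {n : ℕ} (hn : n ≠ 0) {u u' : ℚ_[p]} (hu : u ≠ 0)
    (h : u.valuation + (2 * padicValNat p n + 1 : ℤ) ≤ (u - u').valuation) :
    u'.valuation = u.valuation ∧ ∃ s : ℚ_[p], u' = u * s ^ n := by
  set ε : ℝ := (p : ℝ) ^ (-(2 * padicValNat p n + 1 : ℤ))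
  have hε : ε < ‖(n : ℚ_[p])‖ ^ 2 := zpow_neg_lt_norm_natCast_sq hn
  have hε1 : ε < 1 :=
    hε.trans_le (pow_le_one₀ (norm_nonneg _) (IsUltrametricDist.norm_natCast_le_one _ n))
  have hclose : ‖u - u'‖ ≤ ε * ‖u‖ := norm_sub_le_of_valuation_add_le hu h
  have hupos : 0 < ‖u‖ := norm_pos_iff.mpr hu
  have hnorm : ‖u‖ = ‖u'‖ := norm_eq_of_norm_sub_lt_left (by nlinarith)
  have hu' : u' ≠ 0 := norm_pos_iff.mp (hnorm ▸ hupos)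
  refine ⟨valuation_eq_of_norm_eq hu' hu hnorm.symm, ?_⟩
  obtain ⟨s, hs⟩ := exists_pow_eq_of_norm_sub_one_lt (t := u' / u) <| calc
    ‖u' / u - 1‖ = ‖u - u'‖ / ‖u‖ := by rw [div_sub_one hu, norm_div, norm_sub_rev]
    _ ≤ ε := div_le_of_le_mul₀ hupos.le (by positivity) hclose
    _ < ‖(n : ℚ_[p])‖ ^ 2 := hε
  exact ⟨s, by rw [hs, mul_div_cancel₀ _ hu]⟩

end Padic

namespace DpMin

/-- Cells in `ℚ_p` are cell-like: for every `n ≥ 1` there is `k ≥ 1` such that membership in the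
cell `Cell_{n,λ}(c,γ,δ)` (an annulus condition `γ ≥ v(x−c) ≥ δ` together with a power-coset
condition `x − c ∈ λ·Pₙ`) depends only on the image of `x − c` in `ℚ_p^×/(1 + 𝔪^k)`. -/
theorem cells_are_cellLike (p : ℕ) [Fact p.Prime] (n : ℕ) (hn : 1 ≤ n) :
    ∃ k : ℕ, 1 ≤ k ∧
      ∀ (lam c c' x x' : ℚ_[p]), x ≠ c → x' ≠ c' →
        ∀ (γ : WithTop ℤ) (δ : WithBot ℤ),
          ((Padic.valuation (x - c) : WithTop ℤ) ≤ γ) →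
          ((δ : WithBot ℤ) ≤ (Padic.valuation (x - c) : WithBot ℤ)) →
          (∃ w : ℚ_[p], x - c = lam * w ^ n) →
          (x - c = x' - c' ∨
            Padic.valuation (x - c) + (k : ℤ) ≤ Padic.valuation ((x - c) - (x' - c'))) →
          ((Padic.valuation (x' - c') : WithTop ℤ) ≤ γ ∧
            (δ : WithBot ℤ) ≤ (Padic.valuation (x' - c') : WithBot ℤ) ∧
            ∃ w : ℚ_[p], x' - c' = lam * w ^ n) := by
  refine ⟨2 * padicValNat p n + 1, Nat.le_add_left 1 _, ?_⟩
  intro lam c c' x x' hx _ γ δ hγ hδ ⟨w, hw⟩ hclose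
  obtain ⟨hv, s, hs⟩ : (x' - c').valuation = (x - c).valuation ∧
      ∃ s : ℚ_[p], x' - c' = (x - c) * s ^ n := by
    rcases hclose with heq | hle
    · exact ⟨heq ▸ rfl, 1, by rw [one_pow, mul_one, heq]⟩
    · exact Padic.valuation_eq_and_exists_eq_mul_pow (by omega) (sub_ne_zero.mpr hx)
        (mod_cast hle)
  refine ⟨hv ▸ hγ, hv ▸ hδ, w * s, ?_⟩
  rw [hs, hw, mul_pow, mul_assoc]

end DpMin
end
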